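/- arXiv:math-ph/0203030 — 10 statements merged into one kernel-verified Lean document; each statement's English description precedes it below -/
import Mathlib

section
/- Let H(x) = (diag(x)^{-1} − Λ)^{-1}, which equals the upper triangular matrix with (i,j)-entry x_i x_{i+1}⋯x_j for i ≤ j and 0 for i > j. For row indices i₁<⋯<i_r and column indices j₁<⋯<j_r, the minor det H(x)^{i₁,…,i_r}_{j₁,…,j_r} vanishes unless i₁ ≤ j₁ < i₂ ≤ j₂ < ⋯ < i_r ≤ j_r, and in that case equals the product (x_{i₁}⋯x_{j₁})(x_{i₂}⋯x_{j₂})⋯(x_{i_r}⋯x_{j_r}). -/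
open scoped Classical in
/-- Minor of the 0/1 "staircase" matrix vanishes when the interlacing condition fails. -/
lemma zdet_zero_aux {K : Type*} [CommRing K] {n r : ℕ} (i j : Fin r → Fin n)
    (hi : StrictMono i) (hj : StrictMono j)
    (hfail : ¬ ((∀ a : Fin r, i a ≤ j a) ∧
        ∀ (a : Fin r) (h : (a : ℕ) + 1 < r), j a < i ⟨(a : ℕ) + 1, h⟩)) :
    (Matrix.of fun a b : Fin r => if i a ≤ j b then (1:K) else 0).det = 0 := by
  set Q : Fin r → ℕ → Prop := fun a m => m = r ∨ ∃ b : Fin r, (b : ℕ) = m ∧ i a ≤ j b with hQ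
  have hQex : ∀ a, ∃ m, Q a m := fun a => ⟨r, Or.inl rfl⟩
  set t : Fin r → ℕ := fun a => Nat.find (hQex a) with ht
  have htspec : ∀ a, Q a (t a) := fun a => Nat.find_spec (hQex a)
  have htmin : ∀ a m, m < t a → ¬ Q a m := fun a m hm => Nat.find_min (hQex a) hm
  have htle : ∀ a, t a ≤ r := fun a => Nat.find_min' (hQex a) (Or.inl rfl)
  -- row characterization
  have hrow : ∀ a b : Fin r, (if i a ≤ j b then (1:K) else 0) = if t a ≤ (b : ℕ) then 1 else 0 := by
    intro a b
    by_cases hb : t a ≤ (b : ℕ)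
    · rcases htspec a with h | ⟨b', hb', hab⟩
      · omega
      · have hb'b : b' ≤ b := by
          rw [Fin.le_def]; omega
        have : i a ≤ j b := hab.trans (hj.monotone hb'b)
        rw [if_pos this, if_pos hb]
    · push_neg at hb
      have hnq := htmin a b hb
      rw [hQ] at hnq
      have : ¬ i a ≤ j b := fun h => hnq (Or.inr ⟨b, rfl, h⟩)
      rw [if_neg this, if_neg (by omega)]
  -- monotonicity of t
  have htmono : Monotone t := by
    intro a a' haa'
    rcases htspec a' with h | ⟨b', hb', hab⟩
    · exact le_of_le_of_eq (htle a) h.symm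
    · exact Nat.find_min' (hQex a) (Or.inr ⟨b', hb', (hi.monotone haa').trans hab⟩)
  by_cases hinj : Function.Injective t
  · by_cases hr' : ∃ a, t a = r
    · obtain ⟨a, ha⟩ := hr'
      refine Matrix.det_eq_zero_of_row_eq_zero a (fun b => ?_)
      have : ¬ t a ≤ (b : ℕ) := by omega
      simp only [Matrix.of_apply, hrow a b, if_neg this]
    · push_neg at hr'
      have htlt : ∀ a, t a < r := fun a => lt_of_le_of_ne (htle a) (hr' a)
      set t' : Fin r → Fin r := fun a => ⟨t a, htlt a⟩ with ht'
      have ht'inj : Function.Injective t' := by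
        intro a a' h
        exact hinj (congrArg Fin.val h)
      have ht'mono : Monotone t' := fun a a' h => by
        simp only [ht', Fin.mk_le_mk]; exact htmono h
      have ht'sm : StrictMono t' := ht'mono.strictMono_of_injective ht'inj
      have ht'surj : Function.Surjective t' := Finite.surjective_of_injective ht'inj
      haveI : WellFoundedLT (Fin r) := Finite.to_wellFoundedLT
      have ht'id : t' = id := by
        refine (ht'sm.range_inj strictMono_id).1 ?_
        rw [Set.range_id, Set.range_eq_univ]
        exact ht'surj
      have htid : ∀ a : Fin r, t a = (a : ℕ) := by
        intro a
        have := congrFun ht'id a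
        exact congrArg Fin.val this
      exfalso
      refine hfail ⟨fun a => ?_, fun a h => ?_⟩
      · rcases htspec a with h | ⟨b', hb', hab⟩
        · have := htlt a; omega
        · have : b' = a := Fin.ext (by rw [hb', htid a])
          rwa [this] at hab
      · have h' := htid ⟨(a : ℕ) + 1, h⟩
        simp only [Fin.val_mk] at h'
        have hlt : (a : ℕ) < t ⟨(a : ℕ) + 1, h⟩ := by omega
        have hnq := htmin _ _ hlt
        rw [hQ] at hnq
        exact lt_of_not_ge (fun hle => hnq (Or.inr ⟨a, rfl, hle⟩))
  · rw [Function.not_injective_iff] at hinj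
    obtain ⟨a, a', hta, hne⟩ := hinj
    refine Matrix.det_zero_of_row_eq hne ?_
    funext b
    simp only [Matrix.of_apply, hrow a b, hrow a' b, hta]

/-- For the upper triangular matrix `H(x)` with `(i,j)`-entry `x_i x_{i+1} ⋯ x_j`
for `i ≤ j` and `0` otherwise, the minor `det H(x)^{i₁,…,i_r}_{j₁,…,j_r}` vanishes unless
`i₁ ≤ j₁ < i₂ ≤ j₂ < ⋯ < i_r ≤ j_r`, in which case it equals
`(x_{i₁}⋯x_{j₁})(x_{i₂}⋯x_{j₂})⋯(x_{i_r}⋯x_{j_r})`. -/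
theorem tropical_rsk_stmt1 {K : Type*} [Field K] {n r : ℕ} (x : Fin n → K)
    (hx : ∀ i, x i ≠ 0) (H : Matrix (Fin n) (Fin n) K)
    (hH : H = Matrix.of (fun i j : Fin n =>
      if i ≤ j then ∏ k ∈ Finset.Icc i j, x k else 0))
    (i j : Fin r → Fin n) (hi : StrictMono i) (hj : StrictMono j) :
    (¬ ((∀ a : Fin r, i a ≤ j a) ∧
        ∀ (a : Fin r) (h : (a : ℕ) + 1 < r), j a < i ⟨(a : ℕ) + 1, h⟩) →
      (H.submatrix i j).det = 0) ∧
    (((∀ a : Fin r, i a ≤ j a) ∧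
        ∀ (a : Fin r) (h : (a : ℕ) + 1 < r), j a < i ⟨(a : ℕ) + 1, h⟩) →
      (H.submatrix i j).det = ∏ a : Fin r, ∏ k ∈ Finset.Icc (i a) (j a), x k) := by
  constructor
  · intro hfail
    set u : Fin r → K := fun a => (∏ k ∈ Finset.Iio (i a), x k)⁻¹ with hu
    set v : Fin r → K := fun b => ∏ k ∈ Finset.Iic (j b), x k with hv
    set Z : Matrix (Fin r) (Fin r) K :=
      Matrix.of (fun a b : Fin r => if i a ≤ j b then (1:K) else 0) with hZ
    have hM : H.submatrix i j =
        Matrix.of (fun a b => u a * (Matrix.of (fun a b => v b * Z a b)) a b) := by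
      ext a b
      simp only [Matrix.submatrix_apply, hH, Matrix.of_apply, hZ]
      by_cases hab : i a ≤ j b
      · rw [if_pos hab, if_pos hab, mul_one]
        have hset : Finset.Iic (j b) = Finset.Iio (i a) ∪ Finset.Icc (i a) (j b) := by
          ext k
          simp only [Finset.mem_Iic, Finset.mem_union, Finset.mem_Iio, Finset.mem_Icc,
            Fin.le_def, Fin.lt_def]
          rw [Fin.le_def] at hab
          omega
        have hdisj : Disjoint (Finset.Iio (i a)) (Finset.Icc (i a) (j b)) := by
          rw [Finset.disjoint_left]
          intro k hk hk'
          simp only [Finset.mem_Iio] at hk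
          simp only [Finset.mem_Icc] at hk'
          exact absurd hk'.1 (not_le_of_gt hk)
        have hne : (∏ k ∈ Finset.Iio (i a), x k) ≠ 0 :=
          Finset.prod_ne_zero_iff.2 (fun k _ => hx k)
        rw [hu, hv]
        simp only
        rw [hset, Finset.prod_union hdisj, inv_mul_cancel_left₀ hne]
      · rw [if_neg hab, if_neg hab, mul_zero, mul_zero]
    rw [hM, Matrix.det_mul_column, Matrix.det_mul_row,
      zdet_zero_aux i j hi hj hfail]
    ring
  · rintro ⟨h1, h2⟩
    have htri : (H.submatrix i j).BlockTriangular id := by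
      intro a b hab
      simp only [id_eq] at hab
      have hlt : (b : ℕ) + 1 < r := by
        have := a.isLt
        have := hab
        omega
      have : j b < i a := by
        refine lt_of_lt_of_le (h2 b hlt) (hi.monotone ?_)
        rw [Fin.le_def]
        simpa using hab
      simp only [Matrix.submatrix_apply, hH, Matrix.of_apply]
      rw [if_neg (not_le_of_gt this)]
    rw [Matrix.det_of_upperTriangular htri]
    refine Finset.prod_congr rfl (fun a _ => ?_)
    simp only [Matrix.submatrix_apply, hH, Matrix.of_apply]
    rw [if_pos (h1 a)]
end

section
/- The matrix E(x) admits the factorization E(x) = diag(x) · (1 + x_{n-1}^{-1} E_{n-1,n}) ⋯ (1 + x₂^{-1} E_{2,3}) (1 + x₁^{-1} E_{1,2}). -/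
lemma aux_step {K : Type*} [Field K] {n : ℕ} (A B C : Matrix (Fin n) (Fin n) K)
    (hAB : A * B = 0) (hsum : A + B = C) :
    (1 + A) * (1 + B) = 1 + C := by
  have : (1 + A) * (1 + B) = 1 + (A + B) + A * B := by noncomm_ring
  rw [this, hAB, add_zero, hsum]

lemma aux_prod {K : Type*} [Field K] {n : ℕ} (x : Fin n → K) (m : ℕ) :
    (((List.range m).reverse.map (fun k =>
        (1 : Matrix (Fin n) (Fin n) K) +
          Matrix.of (fun i j : Fin n =>
            if (i : ℕ) = k ∧ (j : ℕ) = k + 1 then (x i)⁻¹ else 0))).prod)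
    = 1 + Matrix.of (fun i j : Fin n =>
        if (j : ℕ) = (i : ℕ) + 1 ∧ (i : ℕ) < m then (x i)⁻¹ else 0) := by
  induction m with
  | zero =>
    ext i j
    simp [Matrix.one_apply]
  | succ m ih =>
    rw [List.range_succ, List.reverse_append]
    simp only [List.reverse_singleton, List.singleton_append, List.map_cons, List.prod_cons, ih]
    apply aux_step
    · ext i j
      rw [Matrix.mul_apply]
      apply Finset.sum_eq_zero
      intro k _
      simp only [Matrix.of_apply]
      split_ifs <;> first | omega | ring
    · ext i j
      simp only [Matrix.add_apply, Matrix.of_apply]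
      split_ifs <;> first | omega | ring

/-- The factorization
`E(x) = diag(x) · (1 + x_{n-1}⁻¹ E_{n-1,n}) ⋯ (1 + x₂⁻¹ E_{2,3})(1 + x₁⁻¹ E_{1,2})`. -/
theorem tropical_rsk_stmt2 {K : Type*} [Field K] {n : ℕ} (x : Fin n → K)
    (hx : ∀ i, x i ≠ 0) :
    Matrix.diagonal x +
      Matrix.of (fun i j : Fin n => if (j : ℕ) = (i : ℕ) + 1 then (1 : K) else 0) =
    Matrix.diagonal x *
      (((List.range (n - 1)).reverse.map (fun k =>
        (1 : Matrix (Fin n) (Fin n) K) +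
          Matrix.of (fun i j : Fin n =>
            if (i : ℕ) = k ∧ (j : ℕ) = k + 1 then (x i)⁻¹ else 0))).prod) := by
  rw [aux_prod]
  ext i j
  rw [Matrix.diagonal_mul]
  simp only [Matrix.add_apply, Matrix.of_apply, Matrix.one_apply, Matrix.diagonal_apply]
  by_cases h : (j : ℕ) = (i : ℕ) + 1
  · have hlt : (i : ℕ) < n - 1 := by omega
    have hne : i ≠ j := by intro e; rw [e] at h; omega
    simp [h, hlt, hne, mul_inv_cancel₀ (hx i)]
  · have hne : ¬((j : ℕ) = (i : ℕ) + 1 ∧ (i : ℕ) < n - 1) := fun ⟨a, _⟩ => h a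
    rw [if_neg h, if_neg hne, add_zero, add_zero]
    split_ifs <;> ring
end

section
/- The matrix H(x) admits the factorization H(x) = (1 + x₁ E_{1,2})(1 + x₂ E_{2,3})⋯(1 + x_{n-1} E_{n-1,n}) · diag(x). -/
lemma trsk_prod_Ico_succ {K : Type*} [Field K] {n : ℕ} (x : Fin n → K)
    (i M j : Fin n) (hiM : (i : ℕ) ≤ M) (hj : (j : ℕ) = (M : ℕ) + 1) :
    ∏ k ∈ Finset.Ico i j, x k = (∏ k ∈ Finset.Ico i M, x k) * x M := by
  have h1 : Finset.Ico i j = insert M (Finset.Ico i M) := by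
    rw [Finset.Ico_insert_right (show i ≤ M from hiM)]
    ext k
    simp only [Finset.mem_Ico, Finset.mem_Icc, Fin.lt_def, Fin.le_def]
    omega
  rw [h1, Finset.prod_insert Finset.right_notMem_Ico, mul_comm]

lemma trsk_aux {K : Type*} [Field K] {n : ℕ} (x : Fin n → K) :
    ∀ m, m ≤ n →
      (((List.range m).map (fun k =>
        (1 : Matrix (Fin n) (Fin n) K) +
          Matrix.of (fun i j : Fin n =>
            if (i : ℕ) = k ∧ (j : ℕ) = k + 1 then x i else 0))).prod) =
      Matrix.of (fun i j : Fin n =>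
        if (i : ℕ) ≤ (j : ℕ) ∧ ((j : ℕ) ≤ m ∨ (i : ℕ) = (j : ℕ)) then
          ∏ k ∈ Finset.Ico i j, x k else 0) := by
  intro m
  induction m with
  | zero =>
    intro _
    ext i j
    simp only [List.range_zero, List.map_nil, List.prod_nil, Matrix.of_apply, Matrix.one_apply]
    by_cases h : (i : ℕ) = (j : ℕ)
    · have hij : i = j := Fin.ext h
      subst hij
      simp
    · rw [if_neg (fun hh => h (Fin.ext_iff.mp hh)), if_neg (by omega)]
  | succ m ih =>
    intro hm
    have hmn : m < n := hm
    rw [List.range_succ, List.map_append, List.prod_append, ih (Nat.le_of_succ_le hm)]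
    ext i j
    simp only [List.map_cons, List.map_nil, List.prod_cons, List.prod_nil, mul_one,
      Matrix.mul_apply, Matrix.of_apply, Matrix.add_apply, Matrix.one_apply]
    set M : Fin n := ⟨m, hmn⟩ with hM
    have hMv : (M : ℕ) = m := rfl
    have hcond : ∀ p : Fin n, ((p : ℕ) = m) = (p = M) := by
      intro p; simp [Fin.ext_iff, hM]
    by_cases hj : (j : ℕ) = m + 1
    · simp only [hj, and_true, hcond, mul_add, mul_ite, mul_one, mul_zero,
        Finset.sum_add_distrib, Finset.sum_ite_eq', Finset.mem_univ, if_true]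
      by_cases hij : (i : ℕ) = m + 1
      · rw [if_pos ⟨by omega, Or.inr hij⟩, if_neg (fun hc => absurd hc.1 (by omega)),
          zero_mul, add_zero, if_pos ⟨by omega, Or.inr hij⟩]
      · by_cases hle : (i : ℕ) ≤ m
        · rw [if_neg (by omega), if_pos ⟨hle, Or.inl le_rfl⟩, zero_add,
            if_pos ⟨by omega, Or.inl le_rfl⟩,
            trsk_prod_Ico_succ x i M j hle (by omega)]
        · rw [if_neg (by omega), if_neg (fun hc => absurd hc.1 (by omega)),
            zero_mul, add_zero, if_neg (by omega)]
    · simp only [hj, and_false, if_false, mul_add, mul_ite, mul_one, mul_zero, add_zero,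
        Finset.sum_ite_eq', Finset.mem_univ, if_true]
      have hiff : ((i : ℕ) ≤ (j : ℕ) ∧ ((j : ℕ) ≤ m ∨ (i : ℕ) = (j : ℕ))) ↔
          ((i : ℕ) ≤ (j : ℕ) ∧ ((j : ℕ) ≤ m + 1 ∨ (i : ℕ) = (j : ℕ))) := by
        constructor <;> rintro ⟨h1, h2⟩ <;> exact ⟨h1, by omega⟩
      rw [if_congr hiff rfl rfl]

/-- The factorization
`H(x) = (1 + x₁ E_{1,2})(1 + x₂ E_{2,3}) ⋯ (1 + x_{n-1} E_{n-1,n}) · diag(x)`,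
where `H(x)` is the upper triangular matrix with entries `x_i ⋯ x_j` for `i ≤ j`. -/
theorem tropical_rsk_stmt3 {K : Type*} [Field K] {n : ℕ} (x : Fin n → K)
    (hx : ∀ i, x i ≠ 0) :
    Matrix.of (fun i j : Fin n => if i ≤ j then ∏ k ∈ Finset.Icc i j, x k else 0) =
    (((List.range (n - 1)).map (fun k =>
        (1 : Matrix (Fin n) (Fin n) K) +
          Matrix.of (fun i j : Fin n =>
            if (i : ℕ) = k ∧ (j : ℕ) = k + 1 then x i else 0))).prod) *
      Matrix.diagonal x := by
  rw [trsk_aux x (n - 1) (Nat.sub_le n 1)]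
  ext i j
  simp only [Matrix.of_apply, Matrix.mul_diagonal]
  have hjn : (j : ℕ) ≤ n - 1 := by have := j.isLt; omega
  by_cases h : i ≤ j
  · have h' : (i : ℕ) ≤ (j : ℕ) := h
    rw [if_pos h, if_pos ⟨h', Or.inl hjn⟩]
    rw [← Finset.Ico_insert_right h, Finset.prod_insert Finset.right_notMem_Ico, mul_comm]
  · have h' : ¬ ((i : ℕ) ≤ (j : ℕ)) := h
    rw [if_neg h, if_neg (by omega), zero_mul]
end

section
/- With D = diag(1, −1, 1, −1, …, (−1)^{n-1}), the matrices H and E satisfy H(x) = D · E(x̄)^{-1} · D^{-1}, where x̄ = (1/x₁, …, 1/x_n). Consequently, for vectors x¹,…,x^m, the product H(x¹)⋯H(x^m) equals D · (E(x̄^m)⋯E(x̄¹))^{-1} · D^{-1}. -/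
open Matrix

/-- The `n × n` shift matrix `Λ` with `(i,j)`-entry `δ_{j,i+1}`. -/
def shiftM (n : ℕ) (K : Type*) [Field K] : Matrix (Fin n) (Fin n) K :=
  Matrix.of fun i j => if (j : ℕ) = (i : ℕ) + 1 then 1 else 0

/-- `E(x) = diag(x) + Λ`. -/
def EmatS4 {n : ℕ} {K : Type*} [Field K] (x : Fin n → K) : Matrix (Fin n) (Fin n) K :=
  Matrix.diagonal x + shiftM n K

/-- `H(x) = (diag(x)⁻¹ − Λ)⁻¹`. -/
noncomputable def HmatS4 {n : ℕ} {K : Type*} [Field K] (x : Fin n → K) :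
    Matrix (Fin n) (Fin n) K :=
  (Matrix.diagonal (fun j => (x j)⁻¹) - shiftM n K)⁻¹

/-- `D = diag(1, −1, 1, …, (−1)^{n-1})`. -/
def DmatS4 (n : ℕ) (K : Type*) [Field K] : Matrix (Fin n) (Fin n) K :=
  Matrix.diagonal fun i => (-1 : K) ^ (i : ℕ)

lemma DmatS4_sq {n : ℕ} (K : Type*) [Field K] : DmatS4 n K * DmatS4 n K = 1 := by
  rw [DmatS4, Matrix.diagonal_mul_diagonal]
  have : (fun i : Fin n => (-1 : K) ^ (i : ℕ) * (-1) ^ (i : ℕ)) = fun _ => 1 := by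
    funext i
    rw [← pow_add, ← two_mul, pow_mul]
    norm_num
  rw [this, Matrix.diagonal_one]

lemma DmatS4_inv {n : ℕ} (K : Type*) [Field K] : (DmatS4 n K)⁻¹ = DmatS4 n K :=
  Matrix.inv_eq_right_inv (DmatS4_sq K)

lemma DmatS4_conj {n : ℕ} {K : Type*} [Field K] (y : Fin n → K) :
    DmatS4 n K * EmatS4 y * DmatS4 n K = Matrix.diagonal y - shiftM n K := by
  ext i j
  simp only [DmatS4, EmatS4, shiftM, Matrix.diagonal_mul, Matrix.mul_diagonal,
    Matrix.add_apply, Matrix.sub_apply, Matrix.of_apply, Matrix.diagonal_apply]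
  have key : ∀ k : ℕ, (-1 : K) ^ k * (-1) ^ k = 1 := fun k => by
    rw [← pow_add, ← two_mul, pow_mul]; norm_num
  split_ifs with h1 h2 h2
  · omega
  · subst h1; linear_combination (y i) * key (i : ℕ)
  · rw [h2, pow_succ]
    linear_combination (-1 : K) * key (i : ℕ)
  · ring

lemma HmatS4_eq {n : ℕ} {K : Type*} [Field K] (x : Fin n → K) :
    HmatS4 x = DmatS4 n K * (EmatS4 fun j => (x j)⁻¹)⁻¹ * (DmatS4 n K)⁻¹ := by
  rw [HmatS4, ← DmatS4_conj (fun j => (x j)⁻¹), Matrix.mul_inv_rev, Matrix.mul_inv_rev,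
    DmatS4_inv, mul_assoc]

lemma prod_conj {n : ℕ} {K : Type*} [Field K] (l : List (Matrix (Fin n) (Fin n) K)) :
    (l.map fun A => DmatS4 n K * A * (DmatS4 n K)⁻¹).prod =
      DmatS4 n K * l.prod * (DmatS4 n K)⁻¹ := by
  induction l with
  | nil => simp [DmatS4_inv, DmatS4_sq]
  | cons a l ih =>
      rw [List.map_cons, List.prod_cons, ih, DmatS4_inv]
      simp only [List.prod_cons, mul_assoc]
      rw [← mul_assoc (DmatS4 n K) (DmatS4 n K), DmatS4_sq, one_mul]

/-- `H(x) = D · E(x̄)⁻¹ · D⁻¹` with `x̄ = (1/x₁,…,1/x_n)`; consequently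
`H(x¹)⋯H(x^m) = D · (E(x̄^m)⋯E(x̄¹))⁻¹ · D⁻¹`. -/
theorem tropical_rsk_stmt4 {K : Type*} [Field K] {n m : ℕ} (x : Fin n → K)
    (hx : ∀ j, x j ≠ 0) (X : Fin m → Fin n → K) (hX : ∀ i j, X i j ≠ 0) :
    HmatS4 x = DmatS4 n K * (EmatS4 fun j => (x j)⁻¹)⁻¹ * (DmatS4 n K)⁻¹ ∧
    (List.ofFn fun i : Fin m => HmatS4 (X i)).prod =
      DmatS4 n K *
        (((List.ofFn fun i : Fin m => EmatS4 fun j => (X i j)⁻¹).reverse).prod)⁻¹ *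
        (DmatS4 n K)⁻¹ := by
  refine ⟨HmatS4_eq x, ?_⟩
  have h1 : (List.ofFn fun i : Fin m => HmatS4 (X i)) =
      (List.ofFn fun i : Fin m => (EmatS4 fun j => (X i j)⁻¹)⁻¹).map
        (fun A => DmatS4 n K * A * (DmatS4 n K)⁻¹) := by
    rw [List.map_ofFn]
    exact congrArg List.ofFn (funext fun i => HmatS4_eq (X i))
  have h2 : (((List.ofFn fun i : Fin m => EmatS4 fun j => (X i j)⁻¹).reverse).prod)⁻¹ =
      (List.ofFn fun i : Fin m => (EmatS4 fun j => (X i j)⁻¹)⁻¹).prod := by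
    rw [Matrix.list_prod_inv_reverse, List.reverse_reverse, List.map_ofFn]
    rfl
  rw [h1, prod_conj, h2]
end

section
/- Let M = (a^i_j) be an n×n upper triangular matrix over a field K satisfying a^i_j = 0 for j < i or j > i+m, and a^i_j = 1 for j = i+m, for some 1 ≤ m ≤ n. Define Q_{i,j} = det M^{1,…,j−i+1}_{i,…,j}. If Q_{i,j} ≠ 0 for all (i,j) with i ≤ j and i ≤ m, then M decomposes uniquely as M = E₁(v¹)E₂(v²)⋯E_m(v^m), where E_k(v) = diag(v) + Λ_{≥k}, v^i = (1,…,1,v^i_i,…,v^i_n) with all v^i_j ≠ 0, and the entries are given by v^i_i = Q_{i,i} and v^i_j = (Q_{i,j} Q_{i+1,j−1})/(Q_{i+1,j} Q_{i,j−1}) for i < j, i ≤ m. -/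
/-- `E_k(v) = diag(v) + Λ_{≥k}` with the truncated shift matrix (`k` is 0-based here:
the 1-based `E_i` of the paper corresponds to `EkM n K (i-1)`). -/
def EkM (n : ℕ) (K : Type*) [Field K] (k : ℕ) (v : Fin n → K) :
    Matrix (Fin n) (Fin n) K :=
  Matrix.diagonal v +
    Matrix.of (fun a b : Fin n => if k ≤ (a : ℕ) ∧ (b : ℕ) = (a : ℕ) + 1 then 1 else 0)

namespace TRSK5
variable {K : Type*} [Field K] {n : ℕ}

lemma mul_EkM_apply (A : Matrix (Fin n) (Fin n) K) (k : ℕ) (v : Fin n → K) (s b : Fin n) :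
    (A * EkM n K k v) s b = A s b * v b +
      (if k + 1 ≤ (b : ℕ) then
        A s ⟨(b : ℕ) - 1, Nat.lt_of_le_of_lt (Nat.sub_le _ _) b.isLt⟩ else 0) := by
  rw [EkM, Matrix.mul_add, Matrix.add_apply, Matrix.mul_diagonal]
  congr 1
  rw [Matrix.mul_apply]
  by_cases hb : k + 1 ≤ (b : ℕ)
  · rw [if_pos hb]
    rw [Finset.sum_eq_single (⟨(b : ℕ) - 1, Nat.lt_of_le_of_lt (Nat.sub_le _ _) b.isLt⟩ : Fin n)]
    · simp only [Matrix.of_apply]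
      rw [if_pos ⟨by omega, by omega⟩, mul_one]
    · intro x _ hx
      simp only [Matrix.of_apply]
      rw [if_neg, mul_zero]
      rintro ⟨h1, h2⟩
      exact hx (Fin.ext (by simp only [Fin.val_mk]; omega))
    · intro hmem; exact absurd (Finset.mem_univ _) hmem
  · rw [if_neg hb]
    apply Finset.sum_eq_zero
    intro x _
    simp only [Matrix.of_apply]
    rw [if_neg, mul_zero]
    rintro ⟨h1, h2⟩
    omega

def qdet (X : Matrix (Fin n) (Fin n) K) (c r : ℕ) (h : c + r ≤ n) : K :=
  (Matrix.of fun s t : Fin r =>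
    X ⟨(s : ℕ), by have := s.isLt; omega⟩ ⟨c + (t : ℕ), by have := t.isLt; omega⟩).det

lemma qdet_band_one (X : Matrix (Fin n) (Fin n) K) (cw r : ℕ)
    (hb2 : ∀ a b : Fin n, (a : ℕ) + cw < (b : ℕ) → X a b = 0)
    (hb3 : ∀ a b : Fin n, (b : ℕ) = (a : ℕ) + cw → X a b = 1)
    (h : cw + r ≤ n) : qdet X cw r h = 1 := by
  rw [qdet, Matrix.det_of_lowerTriangular]
  · apply Finset.prod_eq_one
    intro t _
    exact hb3 _ _ (by simp [Nat.add_comm])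
  · intro i j hij
    have hij' : (i : ℕ) < (j : ℕ) := Fin.lt_def.mp (OrderDual.toDual_lt_toDual.mp hij)
    exact hb2 _ _ (by simp only [Fin.val_mk]; omega)

lemma qdet_mul_EkM (A : Matrix (Fin n) (Fin n) K) (k c r : ℕ) (hck : c ≤ k)
    (v : Fin n → K) (h : c + r ≤ n) :
    qdet (A * EkM n K k v) c r h
      = (∏ t : Fin r, v ⟨c + (t : ℕ), by have := t.isLt; omega⟩) * qdet A c r h := by
  classical
  set U : Matrix (Fin r) (Fin r) K := Matrix.of (fun t' t : Fin r =>
    if (t' : ℕ) = (t : ℕ) then v ⟨c + (t : ℕ), by have := t.isLt; omega⟩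
    else if (t' : ℕ) + 1 = (t : ℕ) ∧ k + 1 ≤ c + (t : ℕ) then 1 else 0) with hU
  have hUdet : U.det = ∏ t : Fin r, v ⟨c + (t : ℕ), by have := t.isLt; omega⟩ := by
    rw [hU, Matrix.det_of_upperTriangular]
    · apply Finset.prod_congr rfl
      intro t _
      simp
    · intro i j hij
      have hij' : (j : ℕ) < (i : ℕ) := Fin.lt_def.mp hij
      simp only [Matrix.of_apply]
      rw [if_neg (by omega), if_neg (by omega)]
  have hkey : (Matrix.of fun s t : Fin r =>
        (A * EkM n K k v) ⟨(s : ℕ), by have := s.isLt; omega⟩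
          ⟨c + (t : ℕ), by have := t.isLt; omega⟩)
      = (Matrix.of fun s t : Fin r =>
          A ⟨(s : ℕ), by have := s.isLt; omega⟩
            ⟨c + (t : ℕ), by have := t.isLt; omega⟩) * U := by
    ext s t
    rw [Matrix.of_apply, mul_EkM_apply, Matrix.mul_apply]
    symm
    by_cases hkt : k + 1 ≤ c + (t : ℕ)
    · have ht1 : 1 ≤ (t : ℕ) := by omega
      have htr : (t : ℕ) - 1 < r := by omega
      rw [show (if k + 1 ≤ (↑(⟨c + ↑t, by have := t.isLt; omega⟩ : Fin n) : ℕ) then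
            A ⟨↑s, by have := s.isLt; omega⟩ ⟨↑(⟨c + ↑t, by have := t.isLt; omega⟩ : Fin n) - 1,
              Nat.lt_of_le_of_lt (Nat.sub_le _ _) (Fin.isLt _)⟩ else 0)
          = A ⟨↑s, by have := s.isLt; omega⟩ ⟨c + ↑t - 1, by have := t.isLt; omega⟩
        from by rw [if_pos (by simpa using hkt)]]
      rw [Finset.sum_eq_add_of_mem t (⟨(t : ℕ) - 1, htr⟩ : Fin r)
        (Finset.mem_univ _) (Finset.mem_univ _) (by
          intro he; have := congrArg Fin.val he; simp only [Fin.val_mk] at this; omega)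
        ?_]
      · simp only [Matrix.of_apply, hU, Fin.val_mk]
        rw [if_pos trivial, if_neg (by omega), if_pos ⟨by omega, hkt⟩, mul_one]
        have hidx : (⟨c + ((t : ℕ) - 1), by have := t.isLt; omega⟩ : Fin n)
            = ⟨c + (t : ℕ) - 1, by have := t.isLt; omega⟩ :=
          Fin.ext (by simp only [Fin.val_mk]; omega)
        rw [hidx]
      · intro x _ hx
        simp only [Matrix.of_apply, hU]
        rw [if_neg, if_neg, mul_zero]
        · rintro ⟨h1, h2⟩
          exact hx.2 (Fin.ext (by simp only [Fin.val_mk]; omega))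
        · intro h1
          exact hx.1 (Fin.ext h1)
    · rw [if_neg (show ¬ k + 1 ≤ (↑(⟨c + ↑t, by have := t.isLt; omega⟩ : Fin n) : ℕ) from by simpa using hkt), add_zero]
      rw [Finset.sum_eq_single t]
      · simp only [Matrix.of_apply, hU]
        rw [if_pos trivial]
      · intro x _ hx
        simp only [Matrix.of_apply, hU]
        rw [if_neg, if_neg, mul_zero]
        · rintro ⟨h1, h2⟩; omega
        · intro h1; exact hx (Fin.ext h1)
      · intro hmem; exact absurd (Finset.mem_univ _) hmem
  rw [qdet, hkey, Matrix.det_mul, hUdet, mul_comm, qdet]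

def Pprod (V : ℕ → Fin n → K) (c : ℕ) : Matrix (Fin n) (Fin n) K :=
  (List.ofFn fun i : Fin c => EkM n K (i : ℕ) (V (i : ℕ))).prod

lemma Pprod_zero (V : ℕ → Fin n → K) : Pprod V 0 = 1 := by
  simp [Pprod]

lemma Pprod_succ (V : ℕ → Fin n → K) (c : ℕ) :
    Pprod V (c + 1) = Pprod V c * EkM n K c (V c) := by
  rw [Pprod, List.ofFn_succ', List.concat_eq_append, List.prod_append]
  simp [Pprod]

lemma Pprod_band (V : ℕ → Fin n → K) (c : ℕ) :
    (∀ a b : Fin n, (b : ℕ) < (a : ℕ) → Pprod V c a b = 0) ∧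
    (∀ a b : Fin n, (a : ℕ) + c < (b : ℕ) → Pprod V c a b = 0) ∧
    (∀ a b : Fin n, (b : ℕ) = (a : ℕ) + c → Pprod V c a b = 1) := by
  induction c with
  | zero =>
    refine ⟨fun a b hab => ?_, fun a b hab => ?_, fun a b hab => ?_⟩ <;>
      rw [Pprod_zero] <;> rw [Matrix.one_apply]
    · rw [if_neg (by intro hh; rw [hh] at hab; omega)]
    · rw [if_neg (by intro hh; rw [hh] at hab; omega)]
    · rw [if_pos (Fin.ext (by omega)).symm]
  | succ c ih =>
    obtain ⟨ih1, ih2, ih3⟩ := ih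
    refine ⟨fun a b hab => ?_, fun a b hab => ?_, fun a b hab => ?_⟩ <;>
      rw [Pprod_succ, mul_EkM_apply]
    · rw [ih1 _ _ hab, zero_mul, zero_add]
      by_cases hc : c + 1 ≤ (b : ℕ)
      · rw [if_pos hc, ih1]; simp only [Fin.val_mk]; omega
      · rw [if_neg hc]
    · rw [ih2 _ _ (by omega), zero_mul, zero_add]
      by_cases hc : c + 1 ≤ (b : ℕ)
      · rw [if_pos hc, ih2]; simp only [Fin.val_mk]; omega
      · rw [if_neg hc]
    · rw [ih2 _ _ (by omega), zero_mul, zero_add]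
      rw [if_pos (by omega), ih3]
      simp only [Fin.val_mk]; omega

lemma qdet_Pprod (V : ℕ → Fin n → K) (c cm r : ℕ) (hc : c ≤ cm) (h : c + r ≤ n) :
    qdet (Pprod V cm) c r h
      = ∏ k ∈ Finset.Ico c cm, ∏ t : Fin r, V k ⟨c + (t : ℕ), by have := t.isLt; omega⟩ := by
  induction cm, hc using Nat.le_induction with
  | base =>
    rw [Finset.Ico_self, Finset.prod_empty]
    exact qdet_band_one _ _ _ (Pprod_band V c).2.1 (Pprod_band V c).2.2 h
  | succ cm hc ih =>
    rw [Pprod_succ, qdet_mul_EkM _ cm c r (by omega) _ h, ih,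
      Finset.prod_Ico_succ_top (by omega), mul_comm]

lemma band_ext (m : ℕ) (M N : Matrix (Fin n) (Fin n) K)
    (hb2 : ∀ a b : Fin n, (a : ℕ) + m < (b : ℕ) → M a b = 0)
    (hb3 : ∀ a b : Fin n, (b : ℕ) = (a : ℕ) + m → M a b = 1)
    (hb1' : ∀ a b : Fin n, (b : ℕ) < (a : ℕ) → N a b = 0)
    (hb2' : ∀ a b : Fin n, (a : ℕ) + m < (b : ℕ) → N a b = 0)
    (hb3' : ∀ a b : Fin n, (b : ℕ) = (a : ℕ) + m → N a b = 1)
    (hb1 : ∀ a b : Fin n, (b : ℕ) < (a : ℕ) → M a b = 0)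
    (hq : ∀ (c r : ℕ) (h : c + r ≤ n), c ≤ m → qdet M c r h = qdet N c r h)
    (hne : ∀ (c r : ℕ) (h : c + r ≤ n), c < m → qdet M c r h ≠ 0) :
    M = N := by
  have main : ∀ J : ℕ, ∀ s : ℕ, ∀ (hJ : J < n) (hs : s < n),
      M ⟨s, hs⟩ ⟨J, hJ⟩ = N ⟨s, hs⟩ ⟨J, hJ⟩ := by
    intro J
    induction J using Nat.strong_induction_on with
    | _ J ihJ =>
      intro s
      induction s using Nat.strong_induction_on with
      | _ s ihs =>
        intro hJ hs
        by_cases hc1 : J < s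
        · rw [hb1 _ _ hc1, hb1' _ _ hc1]
        by_cases hc2 : s + m < J
        · rw [hb2 _ _ hc2, hb2' _ _ hc2]
        by_cases hc3 : J = s + m
        · rw [hb3 _ _ hc3, hb3' _ _ hc3]
        -- main case : s ≤ J < s + m
        set c := J - s with hcdef
        have hcm : c < m := by omega
        have hcr : c + (s + 1) ≤ n := by omega
        have hent : ∀ (a bcol : ℕ) (ha : a < n) (hbc : bcol < n),
            bcol < J ∨ (bcol = J ∧ a < s) →
            M ⟨a, ha⟩ ⟨bcol, hbc⟩ = N ⟨a, ha⟩ ⟨bcol, hbc⟩ := by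
          rintro a bcol ha hbc (hlt | ⟨rfl, hlt⟩)
          · exact ihJ bcol hlt a hbc ha
          · exact ihs a hlt hbc ha
        set A : Matrix (Fin (s + 1)) (Fin (s + 1)) K := Matrix.of
          (fun p t : Fin (s + 1) => M ⟨(p : ℕ), by have := p.isLt; omega⟩
            ⟨c + (t : ℕ), by have := t.isLt; omega⟩) with hA
        set B : Matrix (Fin (s + 1)) (Fin (s + 1)) K := Matrix.of
          (fun p t : Fin (s + 1) => N ⟨(p : ℕ), by have := p.isLt; omega⟩
            ⟨c + (t : ℕ), by have := t.isLt; omega⟩) with hB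
        have hdet : A.det = B.det := hq c (s + 1) hcr (by omega)
        rw [Matrix.det_succ_row A (Fin.last s), Matrix.det_succ_row B (Fin.last s)] at hdet
        rw [← Finset.add_sum_erase _ _ (Finset.mem_univ (Fin.last s)),
          ← Finset.add_sum_erase _ _ (Finset.mem_univ (Fin.last s))] at hdet
        have hsubeq : ∀ j : Fin (s + 1), j ≠ Fin.last s →
            A.submatrix (Fin.last s).succAbove j.succAbove
              = B.submatrix (Fin.last s).succAbove j.succAbove := by
          intro j hj
          ext p q
          simp only [Matrix.submatrix_apply, hA, hB, Matrix.of_apply, Fin.succAbove_last,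
            Fin.coe_castSucc]
          apply hent
          rcases Nat.lt_or_ge ((j.succAbove q : ℕ)) s with hw | hw
          · left; omega
          · right
            have := (j.succAbove q).isLt
            exact ⟨by omega, p.isLt⟩
        have hS : (∑ j ∈ Finset.univ.erase (Fin.last s),
              (-1 : K) ^ ((Fin.last s : ℕ) + (j : ℕ)) * A (Fin.last s) j *
                (A.submatrix (Fin.last s).succAbove j.succAbove).det)
            = ∑ j ∈ Finset.univ.erase (Fin.last s),
              (-1 : K) ^ ((Fin.last s : ℕ) + (j : ℕ)) * B (Fin.last s) j *
                (B.submatrix (Fin.last s).succAbove j.succAbove).det := by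
          refine Finset.sum_congr rfl fun j hj => ?_
          have hjne : j ≠ Fin.last s := Finset.ne_of_mem_erase hj
          have hjlt : (j : ℕ) < s := Fin.val_lt_last hjne
          rw [hsubeq j hjne]
          have he : A (Fin.last s) j = B (Fin.last s) j := by
            simp only [hA, hB, Matrix.of_apply]
            exact hent _ _ _ _ (Or.inl (by omega))
          rw [he]
        rw [hS] at hdet
        have hlast := add_right_cancel hdet
        -- cofactor is nonzero
        have hsub2 : A.submatrix (Fin.last s).succAbove (Fin.last s).succAbove
            = B.submatrix (Fin.last s).succAbove (Fin.last s).succAbove := by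
          ext p q
          simp only [Matrix.submatrix_apply, hA, hB, Matrix.of_apply, Fin.succAbove_last,
            Fin.coe_castSucc]
          apply hent
          left
          have := q.isLt
          omega
        have hDne : (A.submatrix (Fin.last s).succAbove (Fin.last s).succAbove).det ≠ 0 := by
          rcases Nat.eq_zero_or_pos s with hs0 | hs0
          · subst hs0
            rw [Matrix.det_fin_zero]
            exact one_ne_zero
          · have hcr2 : c + s ≤ n := by omega
            have : (A.submatrix (Fin.last s).succAbove (Fin.last s).succAbove).det
                = qdet M c s hcr2 := by
              rw [qdet]
              congr 1
              ext p q
              simp only [Matrix.submatrix_apply, hA, Matrix.of_apply, Fin.succAbove_last,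
                Fin.coe_castSucc]
            rw [this]
            exact hne c s hcr2 hcm
        rw [hsub2] at hlast
        rw [hsub2] at hDne
        have h2 : A (Fin.last s) (Fin.last s) = B (Fin.last s) (Fin.last s) := by
          have h3 := mul_right_cancel₀ hDne hlast
          exact mul_left_cancel₀ (pow_ne_zero _ (by norm_num)) h3
        simp only [hA, hB, Matrix.of_apply, Fin.val_last] at h2
        have hJi : (⟨J, hJ⟩ : Fin n) = ⟨c + s, by omega⟩ := Fin.ext (by simp only [Fin.val_mk]; omega)
        rw [hJi]
        exact h2
  ext a b
  exact main (b : ℕ) (a : ℕ) b.isLt a.isLt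

lemma det_cast {r1 r2 : ℕ} (h : r1 = r2) (A : Matrix (Fin r1) (Fin r1) K)
    (B : Matrix (Fin r2) (Fin r2) K)
    (hAB : ∀ s t, A s t = B (Fin.cast h s) (Fin.cast h t)) : A.det = B.det := by
  subst h
  rw [show A = B from by ext s t; exact hAB s t]

end TRSK5

/-- an upper triangular band matrix `M` (with `a^i_j = 0` for `j < i` or
`j > i + m`, `a^i_j = 1` for `j = i + m`) whose minors `Q_{i,j} = det M^{1,…,j−i+1}_{i,…,j}`
are nonzero for `i ≤ j`, `i ≤ m`, decomposes uniquely as `M = E₁(v¹)⋯E_m(v^m)` with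
`v^i_i = Q_{i,i}` and `v^i_j = Q_{i,j}Q_{i+1,j−1}/(Q_{i+1,j}Q_{i,j−1})` for `i < j`.
(Indices of `Q` are 1-based; rows/columns of matrices are 0-based.) -/
theorem tropical_rsk_stmt5 {K : Type*} [Field K] {n m : ℕ} (hm1 : 1 ≤ m) (hmn : m ≤ n)
    (M : Matrix (Fin n) (Fin n) K)
    (hband1 : ∀ i j : Fin n, (j : ℕ) < (i : ℕ) → M i j = 0)
    (hband2 : ∀ i j : Fin n, (i : ℕ) + m < (j : ℕ) → M i j = 0)
    (hband3 : ∀ i j : Fin n, (j : ℕ) = (i : ℕ) + m → M i j = 1)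
    (Q : ℕ → ℕ → K)
    (hQdef : ∀ (i j : ℕ) (h1 : 1 ≤ i) (h2 : i ≤ j) (h3 : j ≤ n),
      Q i j = (Matrix.of (fun a b : Fin (j - i + 1) =>
        M ⟨(a : ℕ), by have := a.isLt; omega⟩
          ⟨i - 1 + (b : ℕ), by have := b.isLt; omega⟩)).det)
    (hQdeg : ∀ i : ℕ, Q (i + 1) i = 1)
    (hQne : ∀ i j : ℕ, 1 ≤ i → i ≤ m → i ≤ j → j ≤ n → Q i j ≠ 0) :
    ∃ V : Fin m → Fin n → K,
      ((∀ i j, V i j ≠ 0) ∧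
        (∀ (i : Fin m) (j : Fin n), (j : ℕ) < (i : ℕ) → V i j = 1) ∧
        M = (List.ofFn fun i : Fin m => EkM n K (i : ℕ) (V i)).prod ∧
        (∀ (i : Fin m) (j : Fin n),
          ((i : ℕ) = (j : ℕ) → V i j = Q ((i : ℕ) + 1) ((j : ℕ) + 1)) ∧
          ((i : ℕ) < (j : ℕ) → V i j =
            Q ((i : ℕ) + 1) ((j : ℕ) + 1) * Q ((i : ℕ) + 2) (j : ℕ) /
              (Q ((i : ℕ) + 2) ((j : ℕ) + 1) * Q ((i : ℕ) + 1) (j : ℕ))))) ∧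
      ∀ V' : Fin m → Fin n → K,
        ((∀ i j, V' i j ≠ 0) ∧
          (∀ (i : Fin m) (j : Fin n), (j : ℕ) < (i : ℕ) → V' i j = 1) ∧
          M = (List.ofFn fun i : Fin m => EkM n K (i : ℕ) (V' i)).prod) → V' = V := by
  classical
  -- Q in terms of TRSK5.qdet
  have hQq : ∀ (c j : ℕ) (hcj : c < j) (hjn : j ≤ n), Q (c + 1) j = TRSK5.qdet M c (j - c) (by omega) := by
    intro c j hcj hjn
    rw [hQdef (c + 1) j (by omega) (by omega) hjn, TRSK5.qdet]
    refine TRSK5.det_cast (by omega) _ _ ?_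
    intro s t
    refine congrArg₂ M (Fin.ext ?_) (Fin.ext ?_) <;>
      simp only [Fin.val_mk, Fin.coe_cast] <;> omega
  have hqQ : ∀ (c r : ℕ) (h : c + r ≤ n), TRSK5.qdet M c r h = Q (c + 1) (c + r) := by
    intro c r h
    rcases Nat.eq_zero_or_pos r with rfl | hr
    · rw [TRSK5.qdet, Matrix.det_fin_zero]
      show (1 : K) = Q (c + 1) c
      exact (hQdeg c).symm
    · rw [hQq c (c + r) (by omega) (by omega)]
      simp only [show c + r - c = r from by omega]
  have hQm : ∀ j : ℕ, m ≤ j → j ≤ n → Q (m + 1) j = 1 := by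
    intro j h1 h2
    rcases eq_or_lt_of_le h1 with rfl | h1'
    · exact hQdeg _
    · rw [hQq m j h1' h2]
      exact TRSK5.qdet_band_one M m (j - m) hband2 hband3 _
  have hQne' : ∀ i j : ℕ, 1 ≤ i → i ≤ m + 1 → i ≤ j + 1 → j ≤ n → Q i j ≠ 0 := by
    intro i j h1 h2 h3 h4
    rcases Nat.lt_or_ge j i with hji | hij
    · have : i = j + 1 := by omega
      subst this
      rw [hQdeg j]
      exact one_ne_zero
    · rcases Nat.lt_or_ge m i with hmi | him
      · have : i = m + 1 := by omega
        subst this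
        rw [hQm j (by omega) h4]
        exact one_ne_zero
      · exact hQne i j h1 him hij h4
  -- the candidate solution
  set Vf : Fin m → Fin n → K := fun i j =>
    if (j : ℕ) < (i : ℕ) then 1
    else if (j : ℕ) = (i : ℕ) then Q ((i : ℕ) + 1) ((j : ℕ) + 1)
    else Q ((i : ℕ) + 1) ((j : ℕ) + 1) * Q ((i : ℕ) + 2) (j : ℕ) /
      (Q ((i : ℕ) + 2) ((j : ℕ) + 1) * Q ((i : ℕ) + 1) (j : ℕ)) with hVf
  have hVfne : ∀ i j, Vf i j ≠ 0 := by
    intro i j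
    have him := i.isLt
    have hjn := j.isLt
    simp only [hVf]
    by_cases h1 : (j : ℕ) < (i : ℕ)
    · rw [if_pos h1]; exact one_ne_zero
    rw [if_neg h1]
    by_cases h2 : (j : ℕ) = (i : ℕ)
    · rw [if_pos h2]
      exact hQne' _ _ (by omega) (by omega) (by omega) (by omega)
    · rw [if_neg h2]
      exact div_ne_zero
        (mul_ne_zero (hQne' _ _ (by omega) (by omega) (by omega) (by omega))
          (hQne' _ _ (by omega) (by omega) (by omega) (by omega)))
        (mul_ne_zero (hQne' _ _ (by omega) (by omega) (by omega) (by omega))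
          (hQne' _ _ (by omega) (by omega) (by omega) (by omega)))
  have hVfone : ∀ (i : Fin m) (j : Fin n), (j : ℕ) < (i : ℕ) → Vf i j = 1 := by
    intro i j h
    simp only [hVf]
    exact if_pos h
  -- extension to ℕ-indexed family
  set Ve : ℕ → Fin n → K := fun k => if h : k < m then Vf ⟨k, h⟩ else fun _ => 1 with hVe
  have hVeFin : ∀ i : Fin m, Ve (i : ℕ) = Vf i := by
    intro i
    simp only [hVe, dif_pos i.isLt, Fin.eta]
  have hVeone : ∀ (k : ℕ) (l : Fin n), (l : ℕ) < k → Ve k l = 1 := by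
    intro k l hlk
    simp only [hVe]
    by_cases hk : k < m
    · rw [dif_pos hk]
      exact hVfone ⟨k, hk⟩ l hlk
    · rw [dif_neg hk]
  have hVene : ∀ (k : ℕ) (l : Fin n), Ve k l ≠ 0 := by
    intro k l
    simp only [hVe]
    by_cases hk : k < m
    · rw [dif_pos hk]; exact hVfne _ _
    · rw [dif_neg hk]; exact one_ne_zero
  -- the product formula for Vf (E0)
  have hE0 : ∀ (d c : ℕ), c + d = m → ∀ l : Fin n, c ≤ (l : ℕ) →
      (∏ k ∈ Finset.Ico c m, Ve k l) = Q (c + 1) ((l : ℕ) + 1) / Q (c + 1) (l : ℕ) := by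
    intro d
    induction d with
    | zero =>
      intro c hc l hl
      subst hc
      rw [Nat.add_zero] at *
      rw [Finset.Ico_self, Finset.prod_empty, hQm ((l : ℕ) + 1) (by omega) (by omega),
        hQm (l : ℕ) (by omega) (by omega)]
      norm_num
    | succ d ih =>
      intro c hc l hl
      have hcm : c < m := by omega
      rw [Finset.prod_eq_prod_Ico_succ_bot hcm]
      rcases eq_or_lt_of_le hl with hlc | hlc
      · -- l = c
        have h2 : (∏ k ∈ Finset.Ico (c + 1) m, Ve k l) = 1 := by
          apply Finset.prod_eq_one
          intro k hk
          rw [Finset.mem_Ico] at hk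
          exact hVeone k l (by omega)
        rw [h2, mul_one]
        have h3 : Ve c l = Vf ⟨c, hcm⟩ l := by simp only [hVe, dif_pos hcm]
        rw [h3]
        simp only [hVf]
        rw [if_neg (by omega), if_pos (by omega)]
        rw [show (l : ℕ) = c from by omega, hQdeg c, div_one]
      · -- c < l
        rw [ih (c + 1) (by omega) l (by omega)]
        have h3 : Ve c l = Vf ⟨c, hcm⟩ l := by simp only [hVe, dif_pos hcm]
        rw [h3]
        simp only [hVf]
        rw [if_neg (by omega), if_neg (by omega)]
        have hn1 : Q (c + 1 + 1) ((l : ℕ) + 1) ≠ 0 :=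
          hQne' _ _ (by omega) (by omega) (by omega) (by omega)
        have hn2 : Q (c + 1 + 1) (l : ℕ) ≠ 0 :=
          hQne' _ _ (by omega) (by omega) (by omega) (by omega)
        have hn3 : Q (c + 1) (l : ℕ) ≠ 0 :=
          hQne' _ _ (by omega) (by omega) (by omega) (by omega)
        rw [show c + 2 = c + 1 + 1 from rfl]
        field_simp
  -- telescoping (E1)
  have hE1 : ∀ (r c : ℕ) (h : c + r ≤ n), c ≤ m →
      Q (c + 1) (c + r) = ∏ t : Fin r, (∏ k ∈ Finset.Ico c m,
        Ve k ⟨c + (t : ℕ), by have := t.isLt; omega⟩) := by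
    intro r
    induction r with
    | zero =>
      intro c h hcm
      rw [Nat.add_zero]
      simp only [Finset.univ_eq_empty, Finset.prod_empty]
      exact hQdeg c
    | succ r ih =>
      intro c h hcm
      rw [Fin.prod_univ_castSucc]
      simp only [Fin.coe_castSucc, Fin.val_last]
      rw [← ih c (by omega) hcm]
      rw [hE0 (m - c) c (by omega) _ (by simp only [Fin.val_mk]; omega)]
      simp only [Fin.val_mk]
      have hne0 : Q (c + 1) (c + r) ≠ 0 :=
        hQne' _ _ (by omega) (by omega) (by omega) (by omega)
      rw [show c + (r + 1) = c + r + 1 from by omega]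
      field_simp
  -- M equals the product of the EkM factors built from Vf
  have hMP : M = TRSK5.Pprod Ve m := by
    apply TRSK5.band_ext m M (TRSK5.Pprod Ve m) hband2 hband3
      (TRSK5.Pprod_band Ve m).1 (TRSK5.Pprod_band Ve m).2.1 (TRSK5.Pprod_band Ve m).2.2 hband1
    · intro c r h hcm
      rw [hqQ c r h, TRSK5.qdet_Pprod Ve c m r hcm h, Finset.prod_comm, hE1 r c h hcm]
    · intro c r h hcm
      rw [hqQ c r h]
      exact hQne' _ _ (by omega) (by omega) (by omega) (by omega)
  have hlist : ∀ W : Fin m → Fin n → K,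
      (List.ofFn fun i : Fin m => EkM n K (i : ℕ) (W i)).prod =
        TRSK5.Pprod (fun k => if h : k < m then W ⟨k, h⟩ else fun _ => (1 : K)) m := by
    intro W
    rw [TRSK5.Pprod]
    have he : (fun i : Fin m => EkM n K (i : ℕ) (W i))
        = fun i : Fin m => EkM n K (i : ℕ)
            ((fun k => if h : k < m then W ⟨k, h⟩ else fun _ => (1 : K)) (i : ℕ)) := by
      funext i
      simp only [dif_pos i.isLt, Fin.eta]
    rw [he]
  set colf : ℕ → Fin n := fun x => ⟨x % n, Nat.mod_lt x (by omega)⟩ with hcolf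
  have hcoleq : ∀ (x : ℕ) (hx : x < n), colf x = ⟨x, hx⟩ := fun x hx =>
    Fin.ext (by simp only [hcolf, Fin.val_mk]; exact Nat.mod_eq_of_lt hx)
  -- the key uniqueness computation
  have general : ∀ W : Fin m → Fin n → K, (∀ i j, W i j ≠ 0) →
      (∀ (i : Fin m) (j : Fin n), (j : ℕ) < (i : ℕ) → W i j = 1) →
      M = (List.ofFn fun i : Fin m => EkM n K (i : ℕ) (W i)).prod →
      ∀ (i : Fin m) (j : Fin n), W i j = Vf i j := by
    intro W hW0 hW1 hWM
    set We : ℕ → Fin n → K := fun k => if h : k < m then W ⟨k, h⟩ else fun _ => (1 : K) with hWe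
    have hWeFin : ∀ i : Fin m, We (i : ℕ) = W i := by
      intro i
      simp only [hWe, dif_pos i.isLt, Fin.eta]
    have hWeone : ∀ (k : ℕ) (l : Fin n), (l : ℕ) < k → We k l = 1 := by
      intro k l hlk
      simp only [hWe]
      by_cases hk : k < m
      · rw [dif_pos hk]; exact hW1 ⟨k, hk⟩ l hlk
      · rw [dif_neg hk]
    have hWene : ∀ (k : ℕ) (l : Fin n), We k l ≠ 0 := by
      intro k l
      simp only [hWe]
      by_cases hk : k < m
      · rw [dif_pos hk]; exact hW0 _ _
      · rw [dif_neg hk]; exact one_ne_zero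
    have hM' : M = TRSK5.Pprod We m := by rw [hWM, hlist W]
    have hB : ∀ (c r : ℕ) (h : c + r ≤ n), c ≤ m →
        Q (c + 1) (c + r) = ∏ t : Fin r, (∏ k ∈ Finset.Ico c m,
          We k (colf (c + (t : ℕ)))) := by
      intro c r h hcm
      rw [← hqQ c r h, hM', TRSK5.qdet_Pprod We c m r hcm h, Finset.prod_comm]
      apply Finset.prod_congr rfl
      intro t _
      apply Finset.prod_congr rfl
      intro k _
      rw [hcoleq (c + (t : ℕ)) (by have := t.isLt; omega)]
    have hBW : ∀ (c : ℕ), c ≤ m → ∀ l : Fin n, c ≤ (l : ℕ) →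
        (∏ k ∈ Finset.Ico c m, We k l) = Q (c + 1) ((l : ℕ) + 1) / Q (c + 1) (l : ℕ) := by
      intro c hcm l hcl
      have hr1 : c + ((l : ℕ) - c + 1) ≤ n := by have := l.isLt; omega
      have h1 := hB c ((l : ℕ) - c + 1) hr1 hcm
      rw [Fin.prod_univ_castSucc] at h1
      simp only [Fin.coe_castSucc, Fin.val_last] at h1
      rw [← hB c ((l : ℕ) - c) (by omega) hcm] at h1
      rw [show c + ((l : ℕ) - c + 1) = (l : ℕ) + 1 from by omega,
        show c + ((l : ℕ) - c) = (l : ℕ) from by omega] at h1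
      rw [hcoleq (l : ℕ) l.isLt, Fin.eta] at h1
      have hne0 : Q (c + 1) (l : ℕ) ≠ 0 :=
        hQne' _ _ (by omega) (by omega) (by omega) (by have := l.isLt; omega)
      rw [h1, mul_comm, mul_div_assoc, div_self hne0, mul_one]
    -- now compute each entry of W
    intro i j
    by_cases hji : (j : ℕ) < (i : ℕ)
    · rw [hW1 i j hji, (hVfone i j hji)]
    have him := i.isLt
    have hjn := j.isLt
    have hsplit : (∏ k ∈ Finset.Ico (i : ℕ) m, We k j)
        = We (i : ℕ) j * ∏ k ∈ Finset.Ico ((i : ℕ) + 1) m, We k j :=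
      Finset.prod_eq_prod_Ico_succ_bot i.isLt _
    rw [hWeFin i] at hsplit
    by_cases hji2 : (j : ℕ) = (i : ℕ)
    · -- diagonal case
      have htail : (∏ k ∈ Finset.Ico ((i : ℕ) + 1) m, We k j) = 1 := by
        apply Finset.prod_eq_one
        intro k hk
        rw [Finset.mem_Ico] at hk
        exact hWeone k j (by omega)
      rw [htail, mul_one] at hsplit
      rw [← hsplit, hBW (i : ℕ) (by omega) j (by omega)]
      simp only [hVf]
      rw [if_neg hji, if_pos hji2, hji2, hQdeg, div_one]
    · -- off-diagonal case
      have hij2 : (i : ℕ) < (j : ℕ) := by omega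
      have htail : (∏ k ∈ Finset.Ico ((i : ℕ) + 1) m, We k j)
          = Q ((i : ℕ) + 1 + 1) ((j : ℕ) + 1) / Q ((i : ℕ) + 1 + 1) (j : ℕ) :=
        hBW ((i : ℕ) + 1) (by omega) j (by omega)
      have htne : (∏ k ∈ Finset.Ico ((i : ℕ) + 1) m, We k j) ≠ 0 :=
        Finset.prod_ne_zero_iff.mpr fun k _ => hWene k j
      have hfull := hBW (i : ℕ) (by omega) j (by omega)
      rw [hsplit] at hfull
      have hWval : W i j = (Q ((i : ℕ) + 1) ((j : ℕ) + 1) / Q ((i : ℕ) + 1) (j : ℕ)) /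
          (Q ((i : ℕ) + 1 + 1) ((j : ℕ) + 1) / Q ((i : ℕ) + 1 + 1) (j : ℕ)) := by
        have h5 : W i j = (W i j * (∏ k ∈ Finset.Ico ((i : ℕ) + 1) m, We k j)) /
            (∏ k ∈ Finset.Ico ((i : ℕ) + 1) m, We k j) :=
          (mul_div_cancel_right₀ _ htne).symm
        rw [h5, hfull, htail]
      rw [hWval]
      simp only [hVf]
      rw [if_neg hji, if_neg hji2]
      have hn1 : Q ((i : ℕ) + 1) ((j : ℕ) + 1) ≠ 0 :=
        hQne' _ _ (by omega) (by omega) (by omega) (by omega)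
      have hn2 : Q ((i : ℕ) + 2) (j : ℕ) ≠ 0 :=
        hQne' _ _ (by omega) (by omega) (by omega) (by omega)
      have hn3 : Q ((i : ℕ) + 2) ((j : ℕ) + 1) ≠ 0 :=
        hQne' _ _ (by omega) (by omega) (by omega) (by omega)
      have hn4 : Q ((i : ℕ) + 1) (j : ℕ) ≠ 0 :=
        hQne' _ _ (by omega) (by omega) (by omega) (by omega)
      rw [show (i : ℕ) + 2 = (i : ℕ) + 1 + 1 from rfl]
      field_simp
  -- assemble
  refine ⟨Vf, ⟨hVfne, hVfone, ?_, ?_⟩, ?_⟩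
  · rw [hMP, hlist Vf]
  · intro i j
    constructor
    · intro hij
      simp only [hVf]
      rw [if_neg (by omega), if_pos (by omega)]
    · intro hij
      simp only [hVf]
      rw [if_neg (by omega), if_neg (by omega)]
  · rintro W ⟨hW0, hW1, hWM⟩
    funext i j
    exact general W hW0 hW1 hWM i j
end

section
/- Let K be a field of characteristic 0 and K_{>0} a multiplicative subgroup of K* closed under addition. For subtraction-free rational functions f, g ∈ K(x)_{>0} in variables x = (x_i)_{i∈I}, the piecewise linear tropicalization M satisfies: M(fg) = M(f) + M(g), M(f/g) = M(f) − M(g), and M(f+g) = max{M(f), M(g)}. Analogously, m(fg) = m(f) + m(g), m(f/g) = m(f) − m(g), and m(f+g) = min{m(f), m(g)}. -/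
/-!
Since `P` is closed under `+` and `*` and avoids `0`, no cancellation happens among
subtraction-free polynomials: `supp (a * b) = supp a + supp b` (Minkowski sum) and
`supp (a + b) = supp a ∪ supp b`. A linear form maximised over a Minkowski sum gives the sum of
the maxima, and over a union the larger maximum; hence `M(ab) = M(a) + M(b)` and
`M(a + b) = max (M a) (M b)` on polynomials, and dually for `m`. Writing `fg = ac/bd`,
`f/g = ad/bc` and `f + g = (ad + bc)/bd` for `f = a/b`, `g = c/d` transfers these to rational
functions, using `max (u + w) (v + w) = max u v + w` for the sum.
-/

/-- A polynomial is positive (w.r.t. the cone `P ⊆ K`) if it is nonzero and all its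
nonzero coefficients lie in `P`. -/
def PosPoly {K : Type*} [CommSemiring K] {I : Type*} (P : Set K)
    (a : MvPolynomial I K) : Prop :=
  a ≠ 0 ∧ ∀ α, MvPolynomial.coeff α a ≠ 0 → MvPolynomial.coeff α a ∈ P

/-- Max-tropicalization of a polynomial: `x ↦ max{⟨α, x⟩ : α ∈ supp a}`. -/
noncomputable def tropMax {K : Type*} [CommSemiring K] {I : Type*}
    (a : MvPolynomial I K) (x : I → ℝ) : ℝ :=
  if h : a.support.Nonempty then
    a.support.sup' h (fun α => α.sum fun i k => (k : ℝ) * x i)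
  else 0

/-- Min-tropicalization of a polynomial: `x ↦ min{⟨α, x⟩ : α ∈ supp a}`. -/
noncomputable def tropMin {K : Type*} [CommSemiring K] {I : Type*}
    (a : MvPolynomial I K) (x : I → ℝ) : ℝ :=
  if h : a.support.Nonempty then
    a.support.inf' h (fun α => α.sum fun i k => (k : ℝ) * x i)
  else 0

/-- `F` is the max-tropicalization `M(f)` of the subtraction-free rational function `f`,
via some subtraction-free representation `f = a/b`. -/
def IsMTropOf {K : Type*} [Field K] {I : Type*} (P : Set K)
    (f : FractionRing (MvPolynomial I K)) (F : (I → ℝ) → ℝ) : Prop :=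
  ∃ a b : MvPolynomial I K, PosPoly P a ∧ PosPoly P b ∧
    f = algebraMap (MvPolynomial I K) (FractionRing (MvPolynomial I K)) a /
        algebraMap (MvPolynomial I K) (FractionRing (MvPolynomial I K)) b ∧
    F = fun x => tropMax a x - tropMax b x

/-- `F` is the min-tropicalization `m(f)` of `f`. -/
def IsmTropOf {K : Type*} [Field K] {I : Type*} (P : Set K)
    (f : FractionRing (MvPolynomial I K)) (F : (I → ℝ) → ℝ) : Prop :=
  ∃ a b : MvPolynomial I K, PosPoly P a ∧ PosPoly P b ∧
    f = algebraMap (MvPolynomial I K) (FractionRing (MvPolynomial I K)) a /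
        algebraMap (MvPolynomial I K) (FractionRing (MvPolynomial I K)) b ∧
    F = fun x => tropMin a x - tropMin b x

open MvPolynomial
open scoped Pointwise

namespace Finset

variable {α M : Type*} [Add α] [DecidableEq α] [AddCommMonoid M] [LinearOrder M]
  [IsOrderedAddMonoid M] {s t : Finset α}

theorem sup'_add_of_map_add (hs : s.Nonempty) (ht : t.Nonempty) (f : α → M)
    (hf : ∀ a b, f (a + b) = f a + f b) :
    (s + t).sup' (hs.add ht) f = s.sup' hs f + t.sup' ht f := by
  refine le_antisymm (sup'_le _ _ fun c hc => ?_) ?_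
  · obtain ⟨a, ha, b, hb, rfl⟩ := mem_add.1 hc
    rw [hf]
    exact add_le_add (le_sup' f ha) (le_sup' f hb)
  · obtain ⟨a, ha, hfa⟩ := exists_mem_eq_sup' hs f
    obtain ⟨b, hb, hfb⟩ := exists_mem_eq_sup' ht f
    rw [hfa, hfb, ← hf]
    exact le_sup' f (add_mem_add ha hb)

theorem inf'_add_of_map_add (hs : s.Nonempty) (ht : t.Nonempty) (f : α → M)
    (hf : ∀ a b, f (a + b) = f a + f b) :
    (s + t).inf' (hs.add ht) f = s.inf' hs f + t.inf' ht f :=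
  sup'_add_of_map_add (M := Mᵒᵈ) hs ht f hf

end Finset

theorem Finsupp.sum_natCast_mul_add {I : Type*} (x : I → ℝ) (α β : I →₀ ℕ) :
    ((α + β).sum fun i k => (k : ℝ) * x i) =
      (α.sum fun i k => (k : ℝ) * x i) + (β.sum fun i k => (k : ℝ) * x i) := by
  rw [Finsupp.sum_add_index'] <;> intros <;> push_cast <;> ring

section Cone

variable {K : Type*} {P : Set K} {a b : K}

theorem add_mem_of_mem_of_mem_insert_zero [AddZeroClass K] (hPadd : ∀ a ∈ P, ∀ b ∈ P, a + b ∈ P)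
    (ha : a ∈ P) (hb : b ∈ insert 0 P) : a + b ∈ P := by
  rcases hb with rfl | hb
  · rwa [add_zero]
  · exact hPadd a ha b hb

theorem add_mem_insert_zero [AddZeroClass K] (hPadd : ∀ a ∈ P, ∀ b ∈ P, a + b ∈ P)
    (ha : a ∈ insert 0 P) (hb : b ∈ insert 0 P) : a + b ∈ insert 0 P := by
  rcases ha with rfl | ha
  · rwa [zero_add]
  · exact Or.inr (add_mem_of_mem_of_mem_insert_zero hPadd ha hb)

theorem mul_mem_insert_zero [MulZeroClass K] (hPmul : ∀ a ∈ P, ∀ b ∈ P, a * b ∈ P)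
    (ha : a ∈ insert 0 P) (hb : b ∈ insert 0 P) : a * b ∈ insert 0 P := by
  rcases ha with rfl | ha
  · exact Or.inl (zero_mul b)
  rcases hb with rfl | hb
  · exact Or.inl (mul_zero a)
  · exact Or.inr (hPmul a ha b hb)

theorem sum_mem_insert_zero [AddCommMonoid K] (hPadd : ∀ a ∈ P, ∀ b ∈ P, a + b ∈ P)
    {ι : Type*}
    {s : Finset ι} {f : ι → K} (hf : ∀ i ∈ s, f i ∈ insert 0 P) :
    ∑ i ∈ s, f i ∈ insert 0 P :=
  Finset.sum_induction f _ (fun _ _ => add_mem_insert_zero hPadd) (Set.mem_insert 0 P) hf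

theorem sum_mem_of_forall_mem_insert_zero [AddCommMonoid K]
    (hPadd : ∀ a ∈ P, ∀ b ∈ P, a + b ∈ P) {ι : Type*} [DecidableEq ι]
    {s : Finset ι} {f : ι → K} (hf : ∀ i ∈ s, f i ∈ insert 0 P) {j : ι} (hj : j ∈ s)
    (hfj : f j ∈ P) : ∑ i ∈ s, f i ∈ P := by
  rw [← Finset.add_sum_erase s f hj]
  exact add_mem_of_mem_of_mem_insert_zero hPadd hfj
    (sum_mem_insert_zero hPadd fun i hi => hf i (Finset.mem_of_mem_erase hi))

end Cone

namespace PosPoly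

variable {K : Type*} [CommSemiring K] {I : Type*} {P : Set K} {a b : MvPolynomial I K}

theorem support_nonempty (ha : PosPoly P a) : a.support.Nonempty :=
  MvPolynomial.support_nonempty.2 ha.1

theorem coeff_mem_insert_zero (ha : PosPoly P a) (α : I →₀ ℕ) : coeff α a ∈ insert 0 P :=
  or_iff_not_imp_left.2 (ha.2 α)

theorem coeff_mul_mem_insert_zero (hPmul : ∀ a ∈ P, ∀ b ∈ P, a * b ∈ P)
    (hPadd : ∀ a ∈ P, ∀ b ∈ P, a + b ∈ P) (ha : PosPoly P a) (hb : PosPoly P b)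
    (γ : I →₀ ℕ) : coeff γ (a * b) ∈ insert 0 P := by
  classical
  rw [coeff_mul]
  exact sum_mem_insert_zero hPadd fun p _ =>
    mul_mem_insert_zero hPmul (ha.coeff_mem_insert_zero p.1) (hb.coeff_mem_insert_zero p.2)

/-- No cancellation: the term `coeff α a * coeff β b` lies in `P`, all others in `P ∪ {0}`. -/
theorem coeff_add_mem_of_mem_support (hPmul : ∀ a ∈ P, ∀ b ∈ P, a * b ∈ P)
    (hPadd : ∀ a ∈ P, ∀ b ∈ P, a + b ∈ P) (ha : PosPoly P a) (hb : PosPoly P b)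
    {α β : I →₀ ℕ} (hα : α ∈ a.support) (hβ : β ∈ b.support) :
    coeff (α + β) (a * b) ∈ P := by
  classical
  rw [coeff_mul]
  exact sum_mem_of_forall_mem_insert_zero hPadd
    (fun p _ => mul_mem_insert_zero hPmul (ha.coeff_mem_insert_zero p.1)
      (hb.coeff_mem_insert_zero p.2))
    (j := (α, β)) (Finset.HasAntidiagonal.mem_antidiagonal.2 rfl)
    (hPmul _ (ha.2 α (mem_support_iff.1 hα)) _ (hb.2 β (mem_support_iff.1 hβ)))

theorem support_mul [DecidableEq I] (hP0 : ∀ c ∈ P, c ≠ 0)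
    (hPmul : ∀ a ∈ P, ∀ b ∈ P, a * b ∈ P) (hPadd : ∀ a ∈ P, ∀ b ∈ P, a + b ∈ P)
    (ha : PosPoly P a) (hb : PosPoly P b) : (a * b).support = a.support + b.support := by
  refine (MvPolynomial.support_mul a b).antisymm fun γ hγ => ?_
  obtain ⟨α, hα, β, hβ, rfl⟩ := Finset.mem_add.1 hγ
  exact mem_support_iff.2 (hP0 _ (coeff_add_mem_of_mem_support hPmul hPadd ha hb hα hβ))

theorem mul (hP0 : ∀ c ∈ P, c ≠ 0) (hPmul : ∀ a ∈ P, ∀ b ∈ P, a * b ∈ P)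
    (hPadd : ∀ a ∈ P, ∀ b ∈ P, a + b ∈ P) (ha : PosPoly P a) (hb : PosPoly P b) :
    PosPoly P (a * b) := by
  classical
  refine ⟨?_, fun γ hγ => (coeff_mul_mem_insert_zero hPmul hPadd ha hb γ).resolve_left hγ⟩
  rw [← MvPolynomial.support_nonempty, support_mul hP0 hPmul hPadd ha hb]
  exact ha.support_nonempty.add hb.support_nonempty

theorem coeff_add_mem (hPadd : ∀ a ∈ P, ∀ b ∈ P, a + b ∈ P) (ha : PosPoly P a)
    (hb : PosPoly P b) {γ : I →₀ ℕ} (hγ : coeff γ a ≠ 0 ∨ coeff γ b ≠ 0) :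
    coeff γ (a + b) ∈ P := by
  rw [coeff_add]
  rcases hγ with hγ | hγ
  · exact add_mem_of_mem_of_mem_insert_zero hPadd (ha.2 γ hγ) (hb.coeff_mem_insert_zero γ)
  · rw [add_comm]
    exact add_mem_of_mem_of_mem_insert_zero hPadd (hb.2 γ hγ) (ha.coeff_mem_insert_zero γ)

theorem support_add [DecidableEq I] (hP0 : ∀ c ∈ P, c ≠ 0)
    (hPadd : ∀ a ∈ P, ∀ b ∈ P, a + b ∈ P) (ha : PosPoly P a) (hb : PosPoly P b) :
    (a + b).support = a.support ∪ b.support := by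
  refine MvPolynomial.support_add.antisymm fun γ hγ => mem_support_iff.2 (hP0 _ ?_)
  refine coeff_add_mem hPadd ha hb ?_
  simpa only [Finset.mem_union, mem_support_iff] using hγ

theorem add (hP0 : ∀ c ∈ P, c ≠ 0) (hPadd : ∀ a ∈ P, ∀ b ∈ P, a + b ∈ P)
    (ha : PosPoly P a) (hb : PosPoly P b) : PosPoly P (a + b) := by
  classical
  refine ⟨?_, fun γ hγ => coeff_add_mem hPadd ha hb ?_⟩
  · rw [← MvPolynomial.support_nonempty, support_add hP0 hPadd ha hb]
    exact ha.support_nonempty.mono Finset.subset_union_left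
  · by_contra! h
    rw [coeff_add, h.1, h.2, add_zero] at hγ
    exact hγ rfl

end PosPoly

section Tropicalization

variable {K : Type*} [CommSemiring K] {I : Type*} {P : Set K} {a b : MvPolynomial I K}

theorem tropMax_eq_sup' (ha : a.support.Nonempty) (x : I → ℝ) :
    tropMax a x = a.support.sup' ha fun α => α.sum fun i k => (k : ℝ) * x i :=
  dif_pos ha

theorem tropMin_eq_inf' (ha : a.support.Nonempty) (x : I → ℝ) :
    tropMin a x = a.support.inf' ha fun α => α.sum fun i k => (k : ℝ) * x i :=
  dif_pos ha

theorem PosPoly.tropMax_mul (hP0 : ∀ c ∈ P, c ≠ 0) (hPmul : ∀ a ∈ P, ∀ b ∈ P, a * b ∈ P)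
    (hPadd : ∀ a ∈ P, ∀ b ∈ P, a + b ∈ P) (ha : PosPoly P a) (hb : PosPoly P b)
    (x : I → ℝ) : tropMax (a * b) x = tropMax a x + tropMax b x := by
  classical
  rw [tropMax_eq_sup' (ha.mul hP0 hPmul hPadd hb).support_nonempty,
    Finset.sup'_congr _ (support_mul hP0 hPmul hPadd ha hb) fun _ _ => rfl,
    Finset.sup'_add_of_map_add ha.support_nonempty hb.support_nonempty _
      (Finsupp.sum_natCast_mul_add x),
    ← tropMax_eq_sup', ← tropMax_eq_sup']

theorem PosPoly.tropMin_mul (hP0 : ∀ c ∈ P, c ≠ 0) (hPmul : ∀ a ∈ P, ∀ b ∈ P, a * b ∈ P)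
    (hPadd : ∀ a ∈ P, ∀ b ∈ P, a + b ∈ P) (ha : PosPoly P a) (hb : PosPoly P b)
    (x : I → ℝ) : tropMin (a * b) x = tropMin a x + tropMin b x := by
  classical
  rw [tropMin_eq_inf' (ha.mul hP0 hPmul hPadd hb).support_nonempty,
    Finset.inf'_congr _ (support_mul hP0 hPmul hPadd ha hb) fun _ _ => rfl,
    Finset.inf'_add_of_map_add ha.support_nonempty hb.support_nonempty _
      (Finsupp.sum_natCast_mul_add x),
    ← tropMin_eq_inf', ← tropMin_eq_inf']

theorem PosPoly.tropMax_add (hP0 : ∀ c ∈ P, c ≠ 0) (hPadd : ∀ a ∈ P, ∀ b ∈ P, a + b ∈ P)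
    (ha : PosPoly P a) (hb : PosPoly P b) (x : I → ℝ) :
    tropMax (a + b) x = max (tropMax a x) (tropMax b x) := by
  classical
  rw [tropMax_eq_sup' (ha.add hP0 hPadd hb).support_nonempty,
    Finset.sup'_congr _ (support_add hP0 hPadd ha hb) fun _ _ => rfl,
    Finset.sup'_union ha.support_nonempty hb.support_nonempty,
    ← tropMax_eq_sup', ← tropMax_eq_sup']

theorem PosPoly.tropMin_add (hP0 : ∀ c ∈ P, c ≠ 0) (hPadd : ∀ a ∈ P, ∀ b ∈ P, a + b ∈ P)
    (ha : PosPoly P a) (hb : PosPoly P b) (x : I → ℝ) :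
    tropMin (a + b) x = min (tropMin a x) (tropMin b x) := by
  classical
  rw [tropMin_eq_inf' (ha.add hP0 hPadd hb).support_nonempty,
    Finset.inf'_congr _ (support_add hP0 hPadd ha hb) fun _ _ => rfl,
    Finset.inf'_union ha.support_nonempty hb.support_nonempty,
    ← tropMin_eq_inf', ← tropMin_eq_inf']

end Tropicalization

section RationalFunction

variable {K : Type*} [Field K] {I : Type*} {P : Set K}
  {T : MvPolynomial I K → (I → ℝ) → ℝ} {f g : FractionRing (MvPolynomial I K)}
  {F G : (I → ℝ) → ℝ}

/-- `IsMTropOf` and `IsmTropOf` are the instances `T = tropMax` and `T = tropMin`. -/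
def IsTropOf (P : Set K) (T : MvPolynomial I K → (I → ℝ) → ℝ)
    (f : FractionRing (MvPolynomial I K)) (F : (I → ℝ) → ℝ) : Prop :=
  ∃ a b : MvPolynomial I K, PosPoly P a ∧ PosPoly P b ∧
    f = algebraMap (MvPolynomial I K) (FractionRing (MvPolynomial I K)) a /
        algebraMap (MvPolynomial I K) (FractionRing (MvPolynomial I K)) b ∧
    F = fun x => T a x - T b x

theorem IsTropOf.mul (hP0 : ∀ c ∈ P, c ≠ 0) (hPmul : ∀ a ∈ P, ∀ b ∈ P, a * b ∈ P)
    (hPadd : ∀ a ∈ P, ∀ b ∈ P, a + b ∈ P)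
    (hT : ∀ a b, PosPoly P a → PosPoly P b → ∀ x, T (a * b) x = T a x + T b x)
    (hf : IsTropOf P T f F) (hg : IsTropOf P T g G) :
    IsTropOf P T (f * g) (fun x => F x + G x) := by
  obtain ⟨a, b, ha, hb, rfl, rfl⟩ := hf
  obtain ⟨c, d, hc, hd, rfl, rfl⟩ := hg
  refine ⟨a * c, b * d, ha.mul hP0 hPmul hPadd hc, hb.mul hP0 hPmul hPadd hd,
    by rw [map_mul, map_mul, div_mul_div_comm], funext fun x => ?_⟩
  rw [hT a c ha hc, hT b d hb hd]
  ring

theorem IsTropOf.div (hP0 : ∀ c ∈ P, c ≠ 0) (hPmul : ∀ a ∈ P, ∀ b ∈ P, a * b ∈ P)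
    (hPadd : ∀ a ∈ P, ∀ b ∈ P, a + b ∈ P)
    (hT : ∀ a b, PosPoly P a → PosPoly P b → ∀ x, T (a * b) x = T a x + T b x)
    (hf : IsTropOf P T f F) (hg : IsTropOf P T g G) :
    IsTropOf P T (f / g) (fun x => F x - G x) := by
  obtain ⟨a, b, ha, hb, rfl, rfl⟩ := hf
  obtain ⟨c, d, hc, hd, rfl, rfl⟩ := hg
  refine ⟨a * d, b * c, ha.mul hP0 hPmul hPadd hd, hb.mul hP0 hPmul hPadd hc,
    by rw [map_mul, map_mul, div_div_div_eq], funext fun x => ?_⟩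
  rw [hT a d ha hd, hT b c hb hc]
  ring

/-- `op` is `max` or `min`; translation invariance is what lets it pass through `a/b`. -/
theorem IsTropOf.add (hP0 : ∀ c ∈ P, c ≠ 0) (hPmul : ∀ a ∈ P, ∀ b ∈ P, a * b ∈ P)
    (hPadd : ∀ a ∈ P, ∀ b ∈ P, a + b ∈ P) (op : ℝ → ℝ → ℝ)
    (hop : ∀ u v w, op (u + w) (v + w) = op u v + w)
    (hTmul : ∀ a b, PosPoly P a → PosPoly P b → ∀ x, T (a * b) x = T a x + T b x)
    (hTadd : ∀ a b, PosPoly P a → PosPoly P b → ∀ x, T (a + b) x = op (T a x) (T b x))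
    (hf : IsTropOf P T f F) (hg : IsTropOf P T g G) :
    IsTropOf P T (f + g) (fun x => op (F x) (G x)) := by
  obtain ⟨a, b, ha, hb, rfl, rfl⟩ := hf
  obtain ⟨c, d, hc, hd, rfl, rfl⟩ := hg
  have hinj := IsFractionRing.injective (MvPolynomial I K) (FractionRing (MvPolynomial I K))
  have hb0 := (map_ne_zero_iff _ hinj).2 hb.1
  have hd0 := (map_ne_zero_iff _ hinj).2 hd.1
  have had := ha.mul hP0 hPmul hPadd hd
  have hbc := hb.mul hP0 hPmul hPadd hc
  refine ⟨a * d + b * c, b * d, had.add hP0 hPadd hbc, hb.mul hP0 hPmul hPadd hd,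
    by rw [div_add_div _ _ hb0 hd0, map_add, map_mul, map_mul, map_mul], funext fun x => ?_⟩
  rw [hTadd _ _ had hbc, hTmul a d ha hd, hTmul b c hb hc, hTmul b d hb hd, eq_sub_iff_add_eq,
    ← hop]
  congr 1 <;> ring

end RationalFunction

theorem tropical_rsk_stmt7_general {K : Type*} [Field K] {I : Type*}
    (P : Set K) (hP0 : ∀ c ∈ P, c ≠ 0)
    (hPmul : ∀ a ∈ P, ∀ b ∈ P, a * b ∈ P)
    (hPadd : ∀ a ∈ P, ∀ b ∈ P, a + b ∈ P)
    (f g : FractionRing (MvPolynomial I K)) (F G : (I → ℝ) → ℝ) :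
    (IsMTropOf P f F → IsMTropOf P g G →
      IsMTropOf P (f * g) (fun x => F x + G x) ∧
      IsMTropOf P (f / g) (fun x => F x - G x) ∧
      IsMTropOf P (f + g) (fun x => max (F x) (G x))) ∧
    (IsmTropOf P f F → IsmTropOf P g G →
      IsmTropOf P (f * g) (fun x => F x + G x) ∧
      IsmTropOf P (f / g) (fun x => F x - G x) ∧
      IsmTropOf P (f + g) (fun x => min (F x) (G x))) := by
  have hMmul : ∀ a b : MvPolynomial I K, PosPoly P a → PosPoly P b → ∀ x,
      tropMax (a * b) x = tropMax a x + tropMax b x :=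
    fun _ _ ha hb => ha.tropMax_mul hP0 hPmul hPadd hb
  have hmmul : ∀ a b : MvPolynomial I K, PosPoly P a → PosPoly P b → ∀ x,
      tropMin (a * b) x = tropMin a x + tropMin b x :=
    fun _ _ ha hb => ha.tropMin_mul hP0 hPmul hPadd hb
  refine ⟨fun hf hg => ⟨?_, ?_, ?_⟩, fun hf hg => ⟨?_, ?_, ?_⟩⟩
  · exact IsTropOf.mul hP0 hPmul hPadd hMmul hf hg
  · exact IsTropOf.div hP0 hPmul hPadd hMmul hf hg
  · exact IsTropOf.add hP0 hPmul hPadd max (fun _ _ _ => max_add_add_right ..) hMmul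
      (fun _ _ ha hb => ha.tropMax_add hP0 hPadd hb) hf hg
  · exact IsTropOf.mul hP0 hPmul hPadd hmmul hf hg
  · exact IsTropOf.div hP0 hPmul hPadd hmmul hf hg
  · exact IsTropOf.add hP0 hPmul hPadd min (fun _ _ _ => min_add_add_right ..) hmmul
      (fun _ _ ha hb => ha.tropMin_add hP0 hPadd hb) hf hg

/-- for subtraction-free rational functions `f, g`,
`M(fg) = M(f) + M(g)`, `M(f/g) = M(f) − M(g)`, `M(f+g) = max{M(f), M(g)}`, and the
analogous identities for `m` with `min`. -/
theorem tropical_rsk_stmt7 {K : Type*} [Field K] [CharZero K] {I : Type*}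
    (P : Set K) (hP0 : ∀ c ∈ P, c ≠ 0) (hP1 : (1 : K) ∈ P)
    (hPmul : ∀ a ∈ P, ∀ b ∈ P, a * b ∈ P) (hPinv : ∀ a ∈ P, a⁻¹ ∈ P)
    (hPadd : ∀ a ∈ P, ∀ b ∈ P, a + b ∈ P)
    (f g : FractionRing (MvPolynomial I K)) (F G : (I → ℝ) → ℝ) :
    (IsMTropOf P f F → IsMTropOf P g G →
      IsMTropOf P (f * g) (fun x => F x + G x) ∧
      IsMTropOf P (f / g) (fun x => F x - G x) ∧
      IsMTropOf P (f + g) (fun x => max (F x) (G x))) ∧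
    (IsmTropOf P f F → IsmTropOf P g G →
      IsmTropOf P (f * g) (fun x => F x + G x) ∧
      IsmTropOf P (f / g) (fun x => F x - G x) ∧
      IsmTropOf P (f + g) (fun x => min (F x) (G x))) :=
  tropical_rsk_stmt7_general P hP0 hPmul hPadd f g F G
end

section
/- Let x₁,…,x_n, a₁,…,a_n be indeterminates over a field of characteristic 0. The system of algebraic equations a₁x₁ = y₁, a_j x_j = y_j b_j (j=2,…,n), 1/a₁ + 1/x₂ = 1/b₂, and 1/a_j + 1/x_{j+1} = 1/y_j + 1/b_{j+1} (j=2,…,n−1), for unknowns y₁,…,y_n, b₂,…,b_n, is equivalent to the recursive tropical row-insertion formulas: η₁ = ξ₁a₁, η_j = (η_{j−1}+ξ_j)a_j, y₁ = η₁, y_j = η_j/η_{j−1}, b_j = a_j x_j / y_j, where ξ_j = x₁⋯x_j and η_j = y₁⋯y_j. -/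
/-!
Put `ηⱼ = y₁⋯yⱼ`, `ξⱼ = x₁⋯xⱼ`, `c₁ = 1/a₁` and `cⱼ = 1/aⱼ - 1/yⱼ` for `j ≥ 2` (`todaCoeff`).
Once the equations `aⱼxⱼ = yⱼbⱼ` are solved for `bⱼ`, the Toda equations read
`cⱼ + 1/xⱼ₊₁ = 1/bⱼ₊₁`, which after multiplication by `ηⱼxⱼ₊₁` become `ηⱼ₊₁cⱼ₊₁ = ηⱼcⱼ · xⱼ₊₁`,
and `a₁x₁ = y₁` becomes `η₁c₁ = x₁`. So `wⱼ = ηⱼcⱼ` obeys the recursion defining `ξⱼ`, i.e.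
`wⱼ = ξⱼ` for all `j`; and since `ηⱼ₋₁ = ηⱼ/yⱼ`, the identity `ηⱼcⱼ = ξⱼ` is a rearrangement of
`ηⱼ = (ηⱼ₋₁ + ξⱼ)aⱼ`.
-/

open Finset

theorem forall_one_le_iff {P R : ℕ → Prop} :
    (∀ j, 1 ≤ j → R j → P j) ↔ (R 1 → P 1) ∧ ∀ j, 2 ≤ j → R j → P j := by
  refine ⟨fun h => ⟨h 1 le_rfl, fun j hj => h j (by omega)⟩, fun ⟨h1, h2⟩ j hj => ?_⟩
  rcases hj.eq_or_lt with rfl | hj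
  exacts [h1, h2 j hj]

theorem prod_Icc_one_eq_prod_pred_mul {M : Type*} [CommMonoid M] (f : ℕ → M) {j : ℕ}
    (hj : 1 ≤ j) : ∏ k ∈ Icc 1 j, f k = (∏ k ∈ Icc 1 (j - 1), f k) * f j := by
  obtain ⟨i, rfl⟩ : ∃ i, j = i + 1 := ⟨j - 1, by omega⟩
  rw [Nat.add_sub_cancel, prod_Icc_succ_top (by omega)]

theorem forall_eq_prod_Icc_iff {M : Type*} [CommMonoid M] (w x : ℕ → M) {n : ℕ} (hn : 1 ≤ n) :
    (w 1 = x 1 ∧ ∀ j, 1 ≤ j → j + 1 ≤ n → w (j + 1) = w j * x (j + 1)) ↔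
      ∀ j, 1 ≤ j → j ≤ n → w j = ∏ k ∈ Icc 1 j, x k := by
  constructor
  · rintro ⟨h1, hstep⟩ j hj
    induction j, hj using Nat.le_induction with
    | base => exact fun _ => by simpa using h1
    | succ j hj ih =>
      intro hjn
      rw [hstep j hj hjn, ih (by omega), prod_Icc_succ_top (by omega)]
  · intro h
    refine ⟨by simpa using h 1 le_rfl hn, fun j hj hjn => ?_⟩
    rw [h (j + 1) (by omega) hjn, h j hj (by omega), prod_Icc_succ_top (by omega)]

section

variable {K : Type*} [Field K]

theorem toda_step_iff {a x y η c : K} (ha : a ≠ 0) (hx : x ≠ 0) (hy : y ≠ 0) (hη : η ≠ 0) :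
    c + x⁻¹ = (a * x / y)⁻¹ ↔ η * y * (a⁻¹ - y⁻¹) = η * c * x := by
  rw [inv_div, ← eq_sub_iff_add_eq, ← mul_right_inj' hη, ← mul_left_inj' hx, eq_comm]
  field_simp

theorem insertion_step_iff {a y p q : K} (ha : a ≠ 0) (hy : y ≠ 0) :
    p * y * (a⁻¹ - y⁻¹) = q ↔ p * y = (p + q) * a := by
  rw [← mul_left_inj' ha]
  field_simp
  constructor <;> intro h <;> linear_combination h

def todaCoeff (a y : ℕ → K) (j : ℕ) : K :=
  if j = 1 then (a 1)⁻¹ else (a j)⁻¹ - (y j)⁻¹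

variable {a x y b : ℕ → K} {n : ℕ}

theorem todaCoeff_of_ne_one {j : ℕ} (hj : j ≠ 1) : todaCoeff a y j = (a j)⁻¹ - (y j)⁻¹ :=
  if_neg hj

theorem todaCoeff_one : todaCoeff a y 1 = (a 1)⁻¹ :=
  if_pos rfl

theorem mul_todaCoeff_one_eq_iff (ha : a 1 ≠ 0) (c : K) :
    y 1 * todaCoeff a y 1 = c ↔ y 1 = c * a 1 := by
  rw [todaCoeff_one, ← div_eq_mul_inv, div_eq_iff ha]

theorem toda_system_iff (hx : ∀ j, 1 ≤ j → j ≤ n → x j ≠ 0) (ha : ∀ j, 1 ≤ j → j ≤ n → a j ≠ 0)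
    (hy : ∀ j, 1 ≤ j → j ≤ n → y j ≠ 0) (hb : ∀ j, 2 ≤ j → j ≤ n → b j = a j * x j / y j) :
    ((2 ≤ n → (a 1)⁻¹ + (x 2)⁻¹ = (b 2)⁻¹) ∧
      ∀ j, 2 ≤ j → j + 1 ≤ n → (a j)⁻¹ + (x (j + 1))⁻¹ = (y j)⁻¹ + (b (j + 1))⁻¹) ↔
      ∀ j, 1 ≤ j → j + 1 ≤ n →
        (∏ k ∈ Icc 1 (j + 1), y k) * todaCoeff a y (j + 1) =
          (∏ k ∈ Icc 1 j, y k) * todaCoeff a y j * x (j + 1) := by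
  have hη : ∀ j, j ≤ n → ∏ k ∈ Icc 1 j, y k ≠ 0 := fun j hjn =>
    prod_ne_zero_iff.2 fun k hk => hy k (mem_Icc.1 hk).1 ((mem_Icc.1 hk).2.trans hjn)
  have hstep : ∀ j, 1 ≤ j → j + 1 ≤ n →
      (todaCoeff a y j + (x (j + 1))⁻¹ = (b (j + 1))⁻¹ ↔
        (∏ k ∈ Icc 1 (j + 1), y k) * todaCoeff a y (j + 1) =
          (∏ k ∈ Icc 1 j, y k) * todaCoeff a y j * x (j + 1)) := fun j hj hjn => by
    rw [hb (j + 1) (by omega) hjn, prod_Icc_succ_top (by omega),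
      todaCoeff_of_ne_one (j := j + 1) (by omega)]
    exact toda_step_iff (ha _ (by omega) hjn) (hx _ (by omega) hjn) (hy _ (by omega) hjn)
      (hη j (by omega))
  refine (and_congr ?_ ?_).trans (forall_one_le_iff (R := fun j => j + 1 ≤ n)).symm
  · refine forall_congr' fun h2n => ?_
    rw [← todaCoeff_one (y := y)]
    exact hstep 1 le_rfl h2n
  · refine forall₂_congr fun j hj => forall_congr' fun hjn => ?_
    rw [← hstep j (by omega) hjn, todaCoeff_of_ne_one (by omega)]
    constructor <;> intro h <;> linear_combination h

theorem insertion_recursion_iff (hn : 1 ≤ n) (ha : ∀ j, 1 ≤ j → j ≤ n → a j ≠ 0)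
    (hy : ∀ j, 1 ≤ j → j ≤ n → y j ≠ 0) :
    (y 1 = x 1 * a 1 ∧ ∀ j, 2 ≤ j → j ≤ n →
        ∏ k ∈ Icc 1 j, y k = ((∏ k ∈ Icc 1 (j - 1), y k) + ∏ k ∈ Icc 1 j, x k) * a j) ↔
      ∀ j, 1 ≤ j → j ≤ n → (∏ k ∈ Icc 1 j, y k) * todaCoeff a y j = ∏ k ∈ Icc 1 j, x k := by
  rw [forall_one_le_iff (R := fun j => j ≤ n)]
  refine and_congr ?_ (forall₂_congr fun j hj => forall_congr' fun hjn => ?_)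
  · simp only [hn, forall_const, Icc_self, prod_singleton,
      mul_todaCoeff_one_eq_iff (ha 1 le_rfl hn)]
  · rw [todaCoeff_of_ne_one (by omega), prod_Icc_one_eq_prod_pred_mul y (by omega),
      insertion_step_iff (ha j (by omega) hjn) (hy j (by omega) hjn)]

end

theorem tropical_rsk_stmt11_general {K : Type*} [Field K] {n : ℕ} (hn : 1 ≤ n)
    (x a y b : ℕ → K)
    (hx : ∀ j, 1 ≤ j → j ≤ n → x j ≠ 0) (ha : ∀ j, 1 ≤ j → j ≤ n → a j ≠ 0)
    (hy : ∀ j, 1 ≤ j → j ≤ n → y j ≠ 0) :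
    ((a 1 * x 1 = y 1) ∧
     (∀ j, 2 ≤ j → j ≤ n → a j * x j = y j * b j) ∧
     (2 ≤ n → (a 1)⁻¹ + (x 2)⁻¹ = (b 2)⁻¹) ∧
     (∀ j, 2 ≤ j → j + 1 ≤ n →
       (a j)⁻¹ + (x (j + 1))⁻¹ = (y j)⁻¹ + (b (j + 1))⁻¹)) ↔
    ((∏ k ∈ Finset.Icc 1 1, y k) = (∏ k ∈ Finset.Icc 1 1, x k) * a 1 ∧
     (∀ j, 2 ≤ j → j ≤ n →
       (∏ k ∈ Finset.Icc 1 j, y k) =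
         ((∏ k ∈ Finset.Icc 1 (j - 1), y k) + ∏ k ∈ Finset.Icc 1 j, x k) * a j) ∧
     (∀ j, 2 ≤ j → j ≤ n → b j = a j * x j / y j)) := by
  have hb_iff : (∀ j, 2 ≤ j → j ≤ n → a j * x j = y j * b j) ↔
      ∀ j, 2 ≤ j → j ≤ n → b j = a j * x j / y j :=
    forall₂_congr fun j hj => forall_congr' fun hjn => by
      rw [eq_div_iff (hy j (by omega) hjn), eq_comm, mul_comm (b j)]
  let w j := (∏ k ∈ Icc 1 j, y k) * todaCoeff a y j
  have h1_iff : a 1 * x 1 = y 1 ↔ w 1 = x 1 := by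
    simp only [w, Icc_self, prod_singleton]
    rw [mul_todaCoeff_one_eq_iff (ha 1 le_rfl hn), eq_comm, mul_comm]
  simp only [Icc_self, prod_singleton, hb_iff]
  constructor
  · rintro ⟨h1, hb, htoda⟩
    obtain ⟨hR1, hrec⟩ := (insertion_recursion_iff hn ha hy).2 <| (forall_eq_prod_Icc_iff w x hn).1
      ⟨h1_iff.1 h1, (toda_system_iff hx ha hy hb).1 htoda⟩
    exact ⟨hR1, hrec, hb⟩
  · rintro ⟨hR1, hrec, hb⟩
    obtain ⟨hw1, hstep⟩ := (forall_eq_prod_Icc_iff w x hn).2 <|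
      (insertion_recursion_iff hn ha hy).1 ⟨hR1, hrec⟩
    exact ⟨h1_iff.2 hw1, hb, (toda_system_iff hx ha hy hb).2 hstep⟩

/-- the discrete-Toda-type system
`a₁x₁ = y₁`, `a_jx_j = y_jb_j`, `1/a₁ + 1/x₂ = 1/b₂`,
`1/a_j + 1/x_{j+1} = 1/y_j + 1/b_{j+1}` is equivalent to the recursive tropical
row-insertion formulas `η₁ = ξ₁a₁`, `η_j = (η_{j−1} + ξ_j)a_j`, `b_j = a_jx_j/y_j`,
where `ξ_j = x₁⋯x_j` and `η_j = y₁⋯y_j`. -/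
theorem tropical_rsk_stmt11 {K : Type*} [Field K] [CharZero K] {n : ℕ} (hn : 1 ≤ n)
    (x a y b : ℕ → K)
    (hx : ∀ j, 1 ≤ j → j ≤ n → x j ≠ 0) (ha : ∀ j, 1 ≤ j → j ≤ n → a j ≠ 0)
    (hy : ∀ j, 1 ≤ j → j ≤ n → y j ≠ 0) (hb : ∀ j, 2 ≤ j → j ≤ n → b j ≠ 0) :
    ((a 1 * x 1 = y 1) ∧
     (∀ j, 2 ≤ j → j ≤ n → a j * x j = y j * b j) ∧
     (2 ≤ n → (a 1)⁻¹ + (x 2)⁻¹ = (b 2)⁻¹) ∧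
     (∀ j, 2 ≤ j → j + 1 ≤ n →
       (a j)⁻¹ + (x (j + 1))⁻¹ = (y j)⁻¹ + (b (j + 1))⁻¹)) ↔
    ((∏ k ∈ Finset.Icc 1 1, y k) = (∏ k ∈ Finset.Icc 1 1, x k) * a 1 ∧
     (∀ j, 2 ≤ j → j ≤ n →
       (∏ k ∈ Finset.Icc 1 j, y k) =
         ((∏ k ∈ Finset.Icc 1 (j - 1), y k) + ∏ k ∈ Finset.Icc 1 j, x k) * a j) ∧
     (∀ j, 2 ≤ j → j ≤ n → b j = a j * x j / y j)) :=
  tropical_rsk_stmt11_general hn x a y b hx ha hy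
end

section
/- The tropical row insertion equation E(ā)E(x̄) = E₁(ȳ)E₂(b̄) holds, where ā_j = 1/a_j etc.: explicitly, the matrix product of the two bidiagonal matrices with diagonals (1/a₁,…,1/a_n) and (1/x₁,…,1/x_n) and superdiagonal 1's equals the product of the bidiagonal matrix with diagonal (1/y₁,…,1/y_n) and superdiagonal 1's with the matrix having diagonal (1,1/b₂,…,1/b_n) and superdiagonal entries (0,1,…,1), precisely when y and b are given by the tropical row insertion formulas y₁ = x₁a₁, η_j = (η_{j−1}+ξ_j)a_j with ξ_j = x₁⋯x_j, η_j = y₁⋯y_j, b₁ = 1, b_j = a_j x_j/y_j. -/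
/-- The bidiagonal matrix `E(v̄) = diag(1/v₁,…,1/v_n) + Λ` (entries accessed 1-based). -/
noncomputable def EbarM (n : ℕ) (K : Type*) [Field K] (v : ℕ → K) :
    Matrix (Fin n) (Fin n) K :=
  Matrix.of fun i j =>
    if (j : ℕ) = (i : ℕ) then (v ((i : ℕ) + 1))⁻¹
    else if (j : ℕ) = (i : ℕ) + 1 then 1 else 0

/-- The matrix `E₂(b̄) = diag(1, 1/b₂, …, 1/b_n) + Λ_{≥2}` (first superdiagonal entry 0). -/
noncomputable def E2barM (n : ℕ) (K : Type*) [Field K] (v : ℕ → K) :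
    Matrix (Fin n) (Fin n) K :=
  Matrix.of fun i j =>
    if (j : ℕ) = (i : ℕ) then (if (i : ℕ) = 0 then 1 else (v ((i : ℕ) + 1))⁻¹)
    else if (j : ℕ) = (i : ℕ) + 1 ∧ 1 ≤ (i : ℕ) then 1 else 0

lemma EbarM_mul_apply {K : Type*} [Field K] {n : ℕ} (a : ℕ → K)
    (N : Matrix (Fin n) (Fin n) K) (i j : Fin n) :
    (EbarM n K a * N) i j =
      (a ((i:ℕ)+1))⁻¹ * N i j + (if h : (i:ℕ)+1 < n then N ⟨(i:ℕ)+1, h⟩ j else 0) := by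
  rw [Matrix.mul_apply]
  by_cases h : (i:ℕ)+1 < n
  · rw [dif_pos h]
    have key : ∀ k : Fin n, EbarM n K a i k * N k j =
        (if k = i then (a ((i:ℕ)+1))⁻¹ * N i j else 0) +
        (if k = (⟨(i:ℕ)+1, h⟩ : Fin n) then N ⟨(i:ℕ)+1, h⟩ j else 0) := by
      intro k
      simp only [EbarM, Matrix.of_apply]
      rcases eq_or_ne k i with rfl | hk
      · have : ¬ (k = (⟨(k:ℕ)+1, h⟩ : Fin n)) := by simp [Fin.ext_iff]
        simp [this]
      · rcases eq_or_ne k (⟨(i:ℕ)+1, h⟩ : Fin n) with rfl | hk2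
        · have h1 : ¬ ((((⟨(i:ℕ)+1, h⟩ : Fin n)):ℕ) = (i:ℕ)) := by simp
          simp [h1, hk]
        · have h1 : (k:ℕ) ≠ (i:ℕ) := fun e => hk (Fin.ext e)
          have h2 : (k:ℕ) ≠ (i:ℕ)+1 := fun e => hk2 (Fin.ext e)
          simp [h1, h2, hk, hk2]
    rw [Finset.sum_congr rfl (fun k _ => key k), Finset.sum_add_distrib]
    simp [Finset.sum_ite_eq']
  · rw [dif_neg h]
    have key : ∀ k : Fin n, EbarM n K a i k * N k j =
        (if k = i then (a ((i:ℕ)+1))⁻¹ * N i j else 0) := by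
      intro k
      simp only [EbarM, Matrix.of_apply]
      rcases eq_or_ne k i with rfl | hk
      · simp
      · have h1 : (k:ℕ) ≠ (i:ℕ) := fun e => hk (Fin.ext e)
        have h2 : (k:ℕ) ≠ (i:ℕ)+1 := by omega
        simp [h1, h2, hk]
    rw [Finset.sum_congr rfl (fun k _ => key k)]
    simp [Finset.sum_ite_eq']

lemma EbarM_mul_EbarM {K : Type*} [Field K] {n : ℕ} (a x : ℕ → K) (i j : Fin n) :
    (EbarM n K a * EbarM n K x) i j =
      if (j:ℕ) = (i:ℕ) then (a ((i:ℕ)+1))⁻¹ * (x ((i:ℕ)+1))⁻¹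
      else if (j:ℕ) = (i:ℕ)+1 then (a ((i:ℕ)+1))⁻¹ + (x ((i:ℕ)+2))⁻¹
      else if (j:ℕ) = (i:ℕ)+2 then 1 else 0 := by
  have hj := j.isLt
  rw [EbarM_mul_apply]
  simp only [EbarM, Matrix.of_apply]
  split_ifs <;> first | (exfalso; first | assumption | omega) | ring_nf

lemma EbarM_mul_E2barM {K : Type*} [Field K] {n : ℕ} (y b : ℕ → K) (i j : Fin n) :
    (EbarM n K y * E2barM n K b) i j =
      if (j:ℕ) = (i:ℕ) then (y ((i:ℕ)+1))⁻¹ * (if (i:ℕ) = 0 then 1 else (b ((i:ℕ)+1))⁻¹)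
      else if (j:ℕ) = (i:ℕ)+1 then
        (if 1 ≤ (i:ℕ) then (y ((i:ℕ)+1))⁻¹ else 0) + (b ((i:ℕ)+2))⁻¹
      else if (j:ℕ) = (i:ℕ)+2 then 1 else 0 := by
  have hj := j.isLt
  rw [EbarM_mul_apply]
  simp only [E2barM, Matrix.of_apply]
  split_ifs <;> first | (exfalso; first | assumption | omega) | ring_nf

lemma diaglem {K : Type*} [Field K] (A X Y B : K) (hY : Y ≠ 0) :
    (A⁻¹ * X⁻¹ = Y⁻¹ * B⁻¹) ↔ B = A * X / Y := by
  rw [← mul_inv, ← mul_inv, inv_inj, eq_div_iff hY]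
  constructor <;> intro h <;> linear_combination -h

lemma c1lem {K : Type*} [Field K] (A X Y : K) :
    (A⁻¹ * X⁻¹ = Y⁻¹) ↔ Y = X * A := by
  rw [← mul_inv_rev, inv_inj, eq_comm]

lemma basekey {K : Type*} [Field K] (a1 x1 x2 a2 y1 y2 b2 : K)
    (ha1 : a1 ≠ 0) (hx1 : x1 ≠ 0) (hx2 : x2 ≠ 0) (ha2 : a2 ≠ 0) (hy2 : y2 ≠ 0)
    (h1 : y1 = x1 * a1) (hb : b2 = a2 * x2 / y2) :
    (a1⁻¹ + x2⁻¹ = 0 + b2⁻¹) ↔ (y1 * y2 = (y1 + x1 * x2) * a2) := by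
  subst h1
  rw [hb, inv_div, zero_add]
  constructor
  · intro h
    field_simp at h
    refine mul_right_cancel₀ hx2 ?_
    linear_combination (-(x1 * x2)) * h
  · intro h
    have h'' : a1 * y2 = (a1 + x2) * a2 := by
      refine mul_left_cancel₀ hx1 ?_
      linear_combination h
    field_simp
    linear_combination (-1 : K) * h''

lemma keylem {K : Type*} [Field K] (A X2 Y A2 Y2 b2 em xi : K)
    (hA : A ≠ 0) (hX2 : X2 ≠ 0) (hY : Y ≠ 0) (hA2 : A2 ≠ 0) (hY2 : Y2 ≠ 0)
    (hem : em ≠ 0)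
    (hP : em * Y = (em + xi) * A)
    (hb : b2 = A2 * X2 / Y2) :
    (A⁻¹ + X2⁻¹ = Y⁻¹ + b2⁻¹) ↔ (em * Y * Y2 = (em * Y + xi * X2) * A2) := by
  rw [hb, inv_div]
  constructor
  · intro h
    field_simp at h
    have h' : X2 * Y * A2 + A * Y * A2 = A * X2 * A2 + A * Y * Y2 := by
      refine mul_left_cancel₀ hX2 ?_
      linear_combination X2 * h
    refine mul_right_cancel₀ hA ?_
    linear_combination (-em) * h' + (X2 * A2) * hP
  · intro h
    have h' : X2 * Y * A2 + A * Y * A2 = A * X2 * A2 + A * Y * Y2 := by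
      refine mul_left_cancel₀ hem ?_
      linear_combination (-A) * h + (X2 * A2) * hP
    field_simp
    linear_combination h'

/-- the matrix equation `E(ā)E(x̄) = E₁(ȳ)E₂(b̄)` holds precisely when
`y` and `b` are given by the tropical row-insertion formulas `η₁ = ξ₁a₁`,
`η_j = (η_{j−1} + ξ_j)a_j` (with `ξ_j = x₁⋯x_j`, `η_j = y₁⋯y_j`) and `b_j = a_jx_j/y_j`. -/
theorem tropical_rsk_stmt13 {K : Type*} [Field K] [CharZero K] {n : ℕ} (hn : 1 ≤ n)
    (x a y b : ℕ → K)
    (hx : ∀ j, 1 ≤ j → j ≤ n → x j ≠ 0) (ha : ∀ j, 1 ≤ j → j ≤ n → a j ≠ 0)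
    (hy : ∀ j, 1 ≤ j → j ≤ n → y j ≠ 0) (hb : ∀ j, 2 ≤ j → j ≤ n → b j ≠ 0) :
    (EbarM n K a * EbarM n K x = EbarM n K y * E2barM n K b) ↔
    ((∏ k ∈ Finset.Icc 1 1, y k) = (∏ k ∈ Finset.Icc 1 1, x k) * a 1 ∧
     (∀ j, 2 ≤ j → j ≤ n →
       (∏ k ∈ Finset.Icc 1 j, y k) =
         ((∏ k ∈ Finset.Icc 1 (j - 1), y k) + ∏ k ∈ Finset.Icc 1 j, x k) * a j) ∧
     (∀ j, 2 ≤ j → j ≤ n → b j = a j * x j / y j)) := by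
  have hIcc1 : ∀ v : ℕ → K, (∏ k ∈ Finset.Icc 1 1, v k) = v 1 := fun v => by simp
  have hsucc : ∀ (v : ℕ → K) (m : ℕ),
      (∏ k ∈ Finset.Icc 1 (m+1), v k) = (∏ k ∈ Finset.Icc 1 m, v k) * v (m+1) :=
    fun v m => Finset.prod_Icc_succ_top (by omega) v
  have hηne : ∀ m, m ≤ n → (∏ k ∈ Finset.Icc 1 m, y k) ≠ 0 := by
    intro m hm
    refine Finset.prod_ne_zero_iff.mpr ?_
    intro k hk
    rw [Finset.mem_Icc] at hk
    exact hy k hk.1 (hk.2.trans hm)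
  have hmat : (EbarM n K a * EbarM n K x = EbarM n K y * E2barM n K b) ↔
      ((a 1)⁻¹ * (x 1)⁻¹ = (y 1)⁻¹ ∧
       (∀ m : ℕ, m + 2 ≤ n → (a (m+2))⁻¹ * (x (m+2))⁻¹ = (y (m+2))⁻¹ * (b (m+2))⁻¹) ∧
       (∀ m : ℕ, m + 2 ≤ n →
         (a (m+1))⁻¹ + (x (m+2))⁻¹ = (if 1 ≤ m then (y (m+1))⁻¹ else 0) + (b (m+2))⁻¹)) := by
    constructor
    · intro h
      have he : ∀ i j : Fin n,
          (EbarM n K a * EbarM n K x) i j = (EbarM n K y * E2barM n K b) i j :=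
        fun i j => by rw [h]
      refine ⟨?_, ?_, ?_⟩
      · have h0 := he ⟨0, by omega⟩ ⟨0, by omega⟩
        rw [EbarM_mul_EbarM, EbarM_mul_E2barM] at h0
        simpa using h0
      · intro m hm
        have h0 := he ⟨m+1, by omega⟩ ⟨m+1, by omega⟩
        rw [EbarM_mul_EbarM, EbarM_mul_E2barM] at h0
        simpa using h0
      · intro m hm
        have h0 := he ⟨m, by omega⟩ ⟨m+1, by omega⟩
        rw [EbarM_mul_EbarM, EbarM_mul_E2barM] at h0
        simpa using h0
    · rintro ⟨c1, c2, c3⟩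
      ext i j
      rw [EbarM_mul_EbarM, EbarM_mul_E2barM]
      by_cases h1 : (j:ℕ) = (i:ℕ)
      · rw [if_pos h1, if_pos h1]
        by_cases h0 : (i:ℕ) = 0
        · rw [if_pos h0, h0, mul_one]
          exact c1
        · rw [if_neg h0]
          obtain ⟨m, hm⟩ : ∃ m, (i:ℕ) = m + 1 := ⟨(i:ℕ)-1, by omega⟩
          have hin := i.isLt
          rw [hm]
          exact c2 m (by omega)
      · rw [if_neg h1, if_neg h1]
        by_cases h2 : (j:ℕ) = (i:ℕ)+1
        · rw [if_pos h2, if_pos h2]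
          have hjn := j.isLt
          have := c3 (i:ℕ) (by omega)
          exact this
        · rw [if_neg h2, if_neg h2]
  rw [hmat]
  constructor
  · rintro ⟨c1, c2, c3⟩
    have hy1 : y 1 = x 1 * a 1 := (c1lem _ _ _).1 c1
    have hb' : ∀ m : ℕ, m + 2 ≤ n → b (m+2) = a (m+2) * x (m+2) / y (m+2) :=
      fun m hm => (diaglem _ _ _ _ (hy (m+2) (by omega) (by omega))).1 (c2 m hm)
    have hbgoal : ∀ j, 2 ≤ j → j ≤ n → b j = a j * x j / y j := by
      intro j h2 hjn
      obtain ⟨m, rfl⟩ : ∃ m, j = m + 2 := ⟨j-2, by omega⟩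
      exact hb' m hjn
    refine ⟨by rw [hIcc1, hIcc1]; exact hy1, ?_, hbgoal⟩
    intro j h2
    induction j, h2 using Nat.le_induction with
    | base =>
      intro h2n
      rw [show (2:ℕ) - 1 = 1 by norm_num, show (2:ℕ) = 1+1 from rfl,
        hsucc y 1, hsucc x 1, hIcc1, hIcc1]
      have hS := c3 0 (by omega)
      rw [if_neg (by omega)] at hS
      exact (basekey (a 1) (x 1) (x 2) (a 2) (y 1) (y 2) (b 2)
        (ha 1 (by omega) (by omega)) (hx 1 (by omega) (by omega))
        (hx 2 (by omega) (by omega)) (ha 2 (by omega) (by omega))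
        (hy 2 (by omega) (by omega)) hy1 (hb' 0 (by omega))).1 hS
    | succ j hj ih =>
      intro hjn
      have hP := ih (by omega)
      obtain ⟨m, rfl⟩ : ∃ m, j = m + 1 := ⟨j-1, by omega⟩
      simp only [Nat.add_sub_cancel] at hP ⊢
      rw [hsucc y (m+1), hsucc x (m+1), hsucc y m]
      rw [hsucc y m] at hP
      have hS := c3 m (by omega)
      rw [if_pos (by omega)] at hS
      exact (keylem (a (m+1)) (x (m+1+1)) (y (m+1)) (a (m+1+1)) (y (m+1+1))
        (b (m+1+1)) (∏ k ∈ Finset.Icc 1 m, y k) (∏ k ∈ Finset.Icc 1 (m+1), x k)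
        (ha (m+1) (by omega) (by omega)) (hx (m+2) (by omega) (by omega))
        (hy (m+1) (by omega) (by omega)) (ha (m+2) (by omega) (by omega))
        (hy (m+2) (by omega) (by omega)) (hηne m (by omega)) hP
        (hb' m (by omega))).1 hS
  · rintro ⟨g1, g2, g3⟩
    have hy1 : y 1 = x 1 * a 1 := by rw [hIcc1, hIcc1] at g1; exact g1
    refine ⟨(c1lem _ _ _).2 hy1, ?_, ?_⟩
    · intro m hm
      exact (diaglem _ _ _ _ (hy (m+2) (by omega) (by omega))).2
        (g3 (m+2) (by omega) (by omega))
    · intro m hm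
      by_cases h0 : 1 ≤ m
      · rw [if_pos h0]
        have hPm1 := g2 (m+1) (by omega) (by omega)
        have hPm2 := g2 (m+1+1) (by omega) (by omega)
        simp only [Nat.add_sub_cancel] at hPm1 hPm2
        rw [hsucc y m] at hPm1
        rw [hsucc y (m+1), hsucc x (m+1), hsucc y m] at hPm2
        exact (keylem (a (m+1)) (x (m+1+1)) (y (m+1)) (a (m+1+1)) (y (m+1+1))
          (b (m+1+1)) (∏ k ∈ Finset.Icc 1 m, y k) (∏ k ∈ Finset.Icc 1 (m+1), x k)
          (ha (m+1) (by omega) (by omega)) (hx (m+2) (by omega) (by omega))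
          (hy (m+1) (by omega) (by omega)) (ha (m+2) (by omega) (by omega))
          (hy (m+2) (by omega) (by omega)) (hηne m (by omega)) hPm1
          (g3 (m+2) (by omega) (by omega))).2 hPm2
      · have hm0 : m = 0 := by omega
        subst hm0
        rw [if_neg (by omega)]
        have hP2 := g2 2 (by omega) (by omega)
        rw [show (2:ℕ) - 1 = 1 by norm_num, show (2:ℕ) = 1+1 from rfl,
          hsucc y 1, hsucc x 1, hIcc1, hIcc1] at hP2
        exact (basekey (a 1) (x 1) (x 2) (a 2) (y 1) (y 2) (b 2)
          (ha 1 (by omega) (by omega)) (hx 1 (by omega) (by omega))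
          (hx 2 (by omega) (by omega)) (ha 2 (by omega) (by omega))
          (hy 2 (by omega) (by omega)) hy1 (g3 2 (by omega) (by omega))).2 hP2
end

section
/- For an m×n matrix X = (x^i_j) with entries in K*, define Φ = φ(X) by φ^i_j = Σ_{γ:(i,1)→(1,j)} x_γ, the sum over all monotone lattice paths from (i,1) to (1,j) of the products of entries at vertices on the path. Then the special minor τ^i_j(Φ) equals the product Π_{a≤i, b≤j} x^a_b of all entries in the upper-left i×j corner of X, and consequently x^i_j = (τ^i_j τ^{i−1}_{j−1})/(τ^{i−1}_j τ^i_{j−1}). -/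
/-- A monotone (shortest) lattice path from `(i,1)` to `(1,j)` in the grid, encoded as an
eventually-constant function `p : ℕ → ℕ × ℕ` of length `(i−1)+(j−1)`: each step either
decreases the row by one or increases the column by one. -/
def IsPathNW (i j : ℕ) (p : ℕ → ℕ × ℕ) : Prop :=
  p 0 = (i, 1) ∧
  (∀ k, k < (i - 1) + (j - 1) →
    (p (k + 1) = ((p k).1 - 1, (p k).2) ∨ p (k + 1) = ((p k).1, (p k).2 + 1))) ∧
  (∀ k, (i - 1) + (j - 1) ≤ k → p k = (1, j))

/-- The weight of the path `p : (i,1) → (1,j)`: the product of `x^a_b` over all vertices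
`(a,b)` on the path. -/
def pathProd {K : Type*} [Field K] (x : ℕ → ℕ → K) (i j : ℕ) (p : ℕ → ℕ × ℕ) : K :=
  ∏ k ∈ Finset.range ((i - 1) + (j - 1) + 1), x (p k).1 (p k).2

/-- An `r`-tuple of nonintersecting (pairwise vertex-disjoint) paths
`γ_k : (I k, 1) → (1, J k)`. -/
def NITuple (r : ℕ) (I J : Fin r → ℕ) (γ : Fin r → ℕ → ℕ × ℕ) : Prop :=
  (∀ k, IsPathNW (I k) (J k) (γ k)) ∧
  ∀ k l : Fin r, k ≠ l → ∀ s t : ℕ, γ k s ≠ γ l t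

/-! Splitting the paths `(i,1) → (1,j)` by their first step gives
`φ(i,j) = x^i_1 (φ(i-1,j) + φ'(i,j-1))`, where `φ'` is the path sum of `X` with its first
column removed. In a minor on consecutive rows `r+1, …, r+n` and columns `1, …, n`, subtracting
from each row `ρ > r+1` the multiple `x^ρ_1` of the row above leaves the first column
`(x^1_1 ⋯ x^{r+1}_1, 0, …, 0)` next to the rows of the minor of the same shape for `φ'`, scaled
by `x^{r+2}_1, …, x^{r+n}_1`; induction on `n` gives the corner product. Minors wider than tall
reduce to this case, because reversing a path and reflecting it in the diagonal transposes both
`X` and `Φ`. The ratio formula then follows by cancelling corner products. -/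

open Finset

namespace IsPathNW

variable {i j : ℕ} {p q : ℕ → ℕ × ℕ}

theorem fst_antitone (h : IsPathNW i j p) : Antitone fun k => (p k).1 := by
  refine antitone_nat_of_succ_le fun k => ?_
  by_cases hk : k < (i - 1) + (j - 1)
  · rcases h.2.1 k hk with h' | h' <;> simp [h']
  · simp [h.2.2 k (by omega), h.2.2 (k + 1) (by omega)]

theorem snd_monotone (h : IsPathNW i j p) : Monotone fun k => (p k).2 := by
  refine monotone_nat_of_le_succ fun k => ?_
  by_cases hk : k < (i - 1) + (j - 1)
  · rcases h.2.1 k hk with h' | h' <;> simp [h']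
  · simp [h.2.2 k (by omega), h.2.2 (k + 1) (by omega)]

theorem mem_box (h : IsPathNW i j p) (k : ℕ) :
    1 ≤ (p k).1 ∧ (p k).1 ≤ i ∧ 1 ≤ (p k).2 ∧ (p k).2 ≤ j := by
  have hend := h.2.2 (k + ((i - 1) + (j - 1))) (by omega)
  have h1 := h.fst_antitone (Nat.le_add_right k ((i - 1) + (j - 1)))
  have h2 := h.fst_antitone (Nat.zero_le k)
  have h3 := h.snd_monotone (Nat.zero_le k)
  have h4 := h.snd_monotone (Nat.le_add_right k ((i - 1) + (j - 1)))
  simp only [hend, h.1] at h1 h2 h3 h4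
  exact ⟨h1, h2, h3, h4⟩

theorem one_le_left (h : IsPathNW i j p) : 1 ≤ i := by
  have := h.mem_box 0; omega

theorem one_le_right (h : IsPathNW i j p) : 1 ≤ j := by
  have := h.mem_box 0; omega

theorem tail_of_up (h : IsPathNW i j p) (h1 : p 1 = (i - 1, 1)) :
    IsPathNW (i - 1) j fun k => p (k + 1) := by
  have := h.mem_box 1
  rw [h1] at this
  exact ⟨h1, fun k hk => h.2.1 (k + 1) (by omega), fun k hk => h.2.2 (k + 1) (by omega)⟩

theorem cons_up (h : IsPathNW (i - 1) j q) : IsPathNW i j (Stream'.cons (i, 1) q) := by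
  have := h.one_le_left
  refine ⟨rfl, fun k hk => ?_, fun k hk => ?_⟩
  · cases k with
    | zero => exact Or.inl h.1
    | succ k => exact h.2.1 k (by omega)
  · cases k with
    | zero => omega
    | succ k => exact h.2.2 k (by omega)

theorem tail_of_right (h : IsPathNW i j p) (h1 : p 1 = (i, 2)) :
    IsPathNW i (j - 1) fun k => ((p (k + 1)).1, (p (k + 1)).2 - 1) := by
  have := h.mem_box 1
  rw [h1] at this
  refine ⟨by simp [h1], fun k hk => ?_, fun k hk => by simp [h.2.2 (k + 1) (by omega)]⟩
  have hbox := h.mem_box (k + 1)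
  rcases h.2.1 (k + 1) (by omega) with h' | h' <;> simp only [h']
  · simp
  · exact Or.inr (Prod.ext rfl (by dsimp only; omega))

theorem cons_right (h : IsPathNW i (j - 1) q) :
    IsPathNW i j (Stream'.cons (i, 1) fun k => ((q k).1, (q k).2 + 1)) := by
  have := h.one_le_right
  refine ⟨rfl, fun k hk => ?_, fun k hk => ?_⟩
  · cases k with
    | zero => exact Or.inr (by simp [Stream'.cons, h.1])
    | succ k =>
      rcases h.2.1 k (by omega) with h' | h'
      · exact Or.inl (by simp [Stream'.cons, h'])
      · exact Or.inr (by simp [Stream'.cons, h'])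
  · cases k with
    | zero => omega
    | succ k =>
      show ((q k).1, (q k).2 + 1) = (1, j)
      rw [h.2.2 k (by omega)]
      exact Prod.ext rfl (by dsimp only; omega)

end IsPathNW

theorem setOf_isPathNW_finite (i j : ℕ) : {p : ℕ → ℕ × ℕ | IsPathNW i j p}.Finite := by
  set L := (i - 1) + (j - 1)
  refine Set.Finite.of_finite_image (f := fun p (k : Fin (L + 1)) => p k) ?_ ?_
  · refine (Set.Finite.pi fun _ : Fin (L + 1) =>
      (Set.finite_Iic i).prod (Set.finite_Iic j)).subset ?_
    rintro _ ⟨p, hp, rfl⟩ k -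
    have := hp.mem_box k
    exact ⟨this.2.1, this.2.2.2⟩
  · intro p hp q hq hpq
    funext k
    by_cases hk : k ≤ L
    · exact congrFun hpq ⟨k, by omega⟩
    · rw [hp.2.2 k (by omega), hq.2.2 k (by omega)]

/-- Traverses `p` backwards and reflects it in the diagonal, turning a path `(i,1) → (1,j)` into
one `(j,1) → (1,i)`; past the length the truncated subtraction reads `p 0`, so it rests at
`(1,i)`. -/
def pathTranspose (i j : ℕ) (p : ℕ → ℕ × ℕ) : ℕ → ℕ × ℕ :=
  fun k => (p ((i - 1) + (j - 1) - k)).swap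

theorem IsPathNW.pathTranspose {i j : ℕ} {p : ℕ → ℕ × ℕ} (h : IsPathNW i j p) :
    IsPathNW j i (pathTranspose i j p) := by
  refine ⟨by simp [_root_.pathTranspose, h.2.2 _ le_rfl], fun k hk => ?_, fun k hk => ?_⟩
  · obtain ⟨l, hl⟩ : ∃ l, (i - 1) + (j - 1) - k = l + 1 := ⟨(i - 1) + (j - 1) - k - 1, by omega⟩
    have hl' : (i - 1) + (j - 1) - (k + 1) = l := by omega
    have hbox := h.mem_box (l + 1)
    simp only [_root_.pathTranspose, hl, hl']
    rcases h.2.1 l (by omega) with h' | h' <;> rw [h'] at hbox ⊢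
    · exact Or.inr (Prod.ext rfl (by simp only [Prod.snd_swap]; omega))
    · exact Or.inl rfl
  · simp [_root_.pathTranspose, show (i - 1) + (j - 1) - k = 0 by omega, h.1]

theorem pathTranspose_pathTranspose {i j : ℕ} {p : ℕ → ℕ × ℕ} (h : IsPathNW i j p) :
    pathTranspose j i (pathTranspose i j p) = p := by
  funext k
  simp only [pathTranspose, Prod.swap_swap]
  by_cases hk : k ≤ (i - 1) + (j - 1)
  · congr 1; omega
  · rw [h.2.2 k (by omega), h.2.2 _ (by omega)]

theorem Matrix.det_eq_mul_det_submatrix_succ_of_col_zero {R : Type*} [CommRing R] {n : ℕ}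
    (A : Matrix (Fin (n + 1)) (Fin (n + 1)) R) (h : ∀ a : Fin n, A a.succ 0 = 0) :
    A.det = A 0 0 * (A.submatrix Fin.succ Fin.succ).det := by
  rw [Matrix.det_succ_column_zero, Fin.sum_univ_succ,
    Finset.sum_eq_zero fun a _ => by rw [h a, mul_zero, zero_mul], add_zero]
  simp

theorem prod_Icc_one_eq_prod_range {M : Type*} [CommMonoid M] (f : ℕ → M) (n : ℕ) :
    ∏ a ∈ Icc 1 n, f a = ∏ a ∈ range n, f (a + 1) := by
  rw [← Finset.Ico_add_one_right_eq_Icc, prod_Ico_eq_prod_range]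
  simp [add_comm]

section

variable {K : Type*} [Field K]

noncomputable def pathSum (x : ℕ → ℕ → K) (i j : ℕ) : K :=
  ∑ᶠ (p : ℕ → ℕ × ℕ) (_ : IsPathNW i j p), pathProd x i j p

theorem pathSum_def (x : ℕ → ℕ → K) (i j : ℕ) :
    pathSum x i j = ∑ᶠ p ∈ {p : ℕ → ℕ × ℕ | IsPathNW i j p}, pathProd x i j p := rfl

theorem pathSum_zero_right (x : ℕ → ℕ → K) (i : ℕ) : pathSum x i 0 = 0 := by
  have : {p | IsPathNW i 0 p} = ∅ :=
    Set.eq_empty_of_forall_notMem fun _ hp => absurd hp.one_le_right (by omega)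
  rw [pathSum_def, this, finsum_mem_empty]

theorem pathSum_one_one (x : ℕ → ℕ → K) : pathSum x 1 1 = x 1 1 := by
  have : {p : ℕ → ℕ × ℕ | IsPathNW 1 1 p} = {fun _ => (1, 1)} := by
    ext p
    refine ⟨fun hp => funext fun k => hp.2.2 k (by omega), ?_⟩
    rintro rfl
    exact ⟨rfl, fun k hk => by omega, fun k _ => rfl⟩
  rw [pathSum_def, this, finsum_mem_singleton]
  simp [pathProd]

theorem pathProd_pathTranspose (x : ℕ → ℕ → K) (i j : ℕ) (p : ℕ → ℕ × ℕ) :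
    pathProd (fun a b => x b a) j i (pathTranspose i j p) = pathProd x i j p := by
  rw [pathProd, pathProd, add_comm (j - 1), ← prod_range_reflect]
  refine prod_congr rfl fun k hk => ?_
  simp only [pathTranspose, Prod.fst_swap, Prod.snd_swap]
  have := mem_range.1 hk
  congr 3 <;> omega

theorem pathSum_transpose (x : ℕ → ℕ → K) (i j : ℕ) :
    pathSum x i j = pathSum (fun a b => x b a) j i := by
  rw [pathSum_def, pathSum_def]
  refine finsum_mem_eq_of_bijOn (pathTranspose i j)
    (Set.InvOn.bijOn ⟨fun p hp => pathTranspose_pathTranspose hp,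
      fun q hq => pathTranspose_pathTranspose hq⟩
      (fun p hp => hp.pathTranspose) (fun q hq => hq.pathTranspose))
    fun p _ => (pathProd_pathTranspose x i j p).symm

theorem finsum_pathProd_first_up (x : ℕ → ℕ → K) (i j : ℕ) :
    ∑ᶠ p ∈ {p : ℕ → ℕ × ℕ | IsPathNW i j p ∧ p 1 = (i - 1, 1)}, pathProd x i j p
      = x i 1 * pathSum x (i - 1) j := by
  rw [pathSum_def, mul_finsum_mem]
  refine finsum_mem_eq_of_bijOn (fun p k => p (k + 1))
    (Set.InvOn.bijOn (f' := Stream'.cons (i, 1)) ⟨fun p hp => ?_, fun q _ => rfl⟩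
      (fun p hp => hp.1.tail_of_up hp.2) fun q hq => ⟨hq.cons_up, hq.1⟩) fun p hp => ?_
  · funext k
    cases k with
    | zero => exact hp.1.1.symm
    | succ k => rfl
  · have := hp.1.mem_box 1
    rw [hp.2] at this
    rw [pathProd, pathProd, show (i - 1) + (j - 1) + 1 = (i - 1 - 1) + (j - 1) + 1 + 1 by omega,
      prod_range_succ', hp.1.1, mul_comm]

theorem finsum_pathProd_first_right (x : ℕ → ℕ → K) (i j : ℕ) :
    ∑ᶠ p ∈ {p : ℕ → ℕ × ℕ | IsPathNW i j p ∧ p 1 = (i, 2)}, pathProd x i j p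
      = x i 1 * pathSum (fun a b => x a (b + 1)) i (j - 1) := by
  rw [pathSum_def, mul_finsum_mem]
  refine finsum_mem_eq_of_bijOn (fun p k => ((p (k + 1)).1, (p (k + 1)).2 - 1))
    (Set.InvOn.bijOn (f' := fun q => Stream'.cons (i, 1) fun k => ((q k).1, (q k).2 + 1))
      ⟨fun p hp => ?_, fun q _ => rfl⟩
      (fun p hp => hp.1.tail_of_right hp.2)
      fun q hq => ⟨hq.cons_right, by simp [Stream'.cons, hq.1]⟩)
    fun p hp => ?_
  · funext k
    cases k with
    | zero => exact hp.1.1.symm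
    | succ k =>
      have := hp.1.mem_box (k + 1)
      exact Prod.ext rfl (by dsimp only [Stream'.cons]; omega)
  · have := hp.1.mem_box 1
    rw [hp.2] at this
    rw [pathProd, pathProd, show (i - 1) + (j - 1) + 1 = (i - 1) + (j - 1 - 1) + 1 + 1 by omega,
      prod_range_succ', hp.1.1, mul_comm]
    refine congrArg (x i 1 * ·) (prod_congr rfl fun k _ => ?_)
    have := hp.1.mem_box (k + 1)
    simp only
    congr; omega

theorem setOf_isPathNW_eq_union {i j : ℕ} (hL : 0 < (i - 1) + (j - 1)) :
    {p : ℕ → ℕ × ℕ | IsPathNW i j p} =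
      {p | IsPathNW i j p ∧ p 1 = (i - 1, 1)} ∪ {p | IsPathNW i j p ∧ p 1 = (i, 2)} := by
  ext p
  simp only [Set.mem_ofPred_eq, Set.mem_union, ← and_or_left]
  refine ⟨fun hp => ⟨hp, ?_⟩, And.left⟩
  rcases hp.2.1 0 hL with h | h <;> simp [h, hp.1]

theorem pathSum_eq_first_step (x : ℕ → ℕ → K) {i j : ℕ} (hL : 0 < (i - 1) + (j - 1)) :
    pathSum x i j =
      x i 1 * (pathSum x (i - 1) j + pathSum (fun a b => x a (b + 1)) i (j - 1)) := by
  rw [mul_add, ← finsum_pathProd_first_up, ← finsum_pathProd_first_right, pathSum_def,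
    setOf_isPathNW_eq_union hL]
  refine finsum_mem_union (Set.disjoint_left.2 fun p hp hq => ?_)
    ((setOf_isPathNW_finite i j).subset fun _ => And.left)
    ((setOf_isPathNW_finite i j).subset fun _ => And.left)
  simpa [hp.2] using hq.2

theorem pathSum_col_one (x : ℕ → ℕ → K) {i : ℕ} (hi : 1 ≤ i) :
    pathSum x i 1 = ∏ a ∈ range i, x (a + 1) 1 := by
  induction i, hi using Nat.le_induction with
  | base => simp [pathSum_one_one]
  | succ i hi ih =>
    rw [pathSum_eq_first_step x (by omega), Nat.add_sub_cancel, ih, pathSum_zero_right,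
      prod_range_succ]
    ring

def cornerProd (x : ℕ → ℕ → K) (i j : ℕ) : K :=
  ∏ a ∈ Icc 1 i, ∏ b ∈ Icc 1 j, x a b

theorem cornerProd_eq_prod_range (x : ℕ → ℕ → K) (i j : ℕ) :
    cornerProd x i j = ∏ a ∈ range i, ∏ b ∈ range j, x (a + 1) (b + 1) := by
  simp only [cornerProd, prod_Icc_one_eq_prod_range]

theorem cornerProd_succ_right (x : ℕ → ℕ → K) (i j : ℕ) :
    cornerProd x i (j + 1) =
      (∏ a ∈ range i, x (a + 1) 1) * cornerProd (fun a b => x a (b + 1)) i j := by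
  simp only [cornerProd_eq_prod_range, prod_range_succ', ← prod_mul_distrib]
  exact prod_congr rfl fun _ _ => mul_comm _ _

theorem cornerProd_succ_left (x : ℕ → ℕ → K) (i j : ℕ) :
    cornerProd x (i + 1) j = cornerProd x i j * ∏ b ∈ Icc 1 j, x (i + 1) b :=
  prod_Icc_succ_top (by omega) _

theorem cornerProd_transpose (x : ℕ → ℕ → K) (i j : ℕ) :
    cornerProd (fun a b => x b a) j i = cornerProd x i j :=
  prod_comm

theorem cornerProd_ne_zero {x : ℕ → ℕ → K} {i j : ℕ}
    (hx : ∀ a b, 1 ≤ a → a ≤ i → 1 ≤ b → b ≤ j → x a b ≠ 0) : cornerProd x i j ≠ 0 := by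
  simp only [cornerProd, prod_ne_zero_iff, mem_Icc]
  exact fun a ha b hb => hx a b ha.1 ha.2 hb.1 hb.2

theorem eq_cornerProd_mul_div {x : ℕ → ℕ → K} {i j : ℕ} (hi : 1 ≤ i) (hj : 1 ≤ j)
    (hx : ∀ a b, 1 ≤ a → a ≤ i → 1 ≤ b → b ≤ j → x a b ≠ 0) :
    x i j = cornerProd x i j * cornerProd x (i - 1) (j - 1) /
      (cornerProd x (i - 1) j * cornerProd x i (j - 1)) := by
  obtain ⟨i, rfl⟩ : ∃ i', i = i' + 1 := ⟨i - 1, by omega⟩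
  obtain ⟨j, rfl⟩ : ∃ j', j = j' + 1 := ⟨j - 1, by omega⟩
  have h₁ : cornerProd x i (j + 1) ≠ 0 :=
    cornerProd_ne_zero fun a b h1 h2 h3 h4 => hx a b h1 (by omega) h3 h4
  have h₂ : cornerProd x (i + 1) j ≠ 0 :=
    cornerProd_ne_zero fun a b h1 h2 h3 h4 => hx a b h1 h2 h3 (by omega)
  simp only [Nat.add_sub_cancel]
  rw [eq_div_iff (mul_ne_zero h₁ h₂), cornerProd_succ_left, cornerProd_succ_left,
    prod_Icc_succ_top (by omega)]
  ring

theorem det_pathSum_rows_succ (x : ℕ → ℕ → K) (r n : ℕ) :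
    (Matrix.of fun a b : Fin (n + 1) => pathSum x (r + a + 1) (b + 1)).det =
      pathSum x (r + 1) 1 * ((∏ a : Fin n, x (r + 1 + a + 1) 1) *
        (Matrix.of fun a b : Fin n =>
          pathSum (fun a b => x a (b + 1)) (r + 1 + a + 1) (b + 1)).det) := by
  set x' : ℕ → ℕ → K := fun a b => x a (b + 1)
  let B : Matrix (Fin (n + 1)) (Fin (n + 1)) K := Matrix.of fun a b =>
    Fin.cases (pathSum x (r + 1) (b + 1))
      (fun a => x (r + 1 + a + 1) 1 * pathSum x' (r + 1 + a + 1) b) a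
  have hB : (Matrix.of fun a b : Fin (n + 1) => pathSum x (r + a + 1) (b + 1)).det = B.det := by
    refine Matrix.det_eq_of_forall_row_eq_smul_add_pred (fun a => x (r + 1 + a + 1) 1)
      (fun b => by simp [B]) fun a b => ?_
    simp only [Matrix.of_apply, Fin.val_succ, Fin.val_castSucc, Fin.cases_succ, B,
      show r + (a + 1) + 1 = r + 1 + a + 1 by omega,
      pathSum_eq_first_step x (i := r + 1 + a + 1) (j := b + 1) (by omega)]
    simp only [Nat.add_sub_cancel, x']
    rw [show r + 1 + (a : ℕ) = r + a + 1 by omega]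
    ring
  have hsub : B.submatrix Fin.succ Fin.succ = Matrix.of fun a b : Fin n =>
      x (r + 1 + a + 1) 1 *
        Matrix.of (fun a b : Fin n => pathSum x' (r + 1 + a + 1) (b + 1)) a b := by
    ext a b
    simp [B]
  rw [hB, Matrix.det_eq_mul_det_submatrix_succ_of_col_zero B fun a => by
    simp [B, pathSum_zero_right], hsub, Matrix.det_mul_column]
  simp [B]

theorem det_pathSum_rows (n : ℕ) : ∀ (x : ℕ → ℕ → K) (r : ℕ),
    (Matrix.of fun a b : Fin n => pathSum x (r + a + 1) (b + 1)).det = cornerProd x (r + n) n := by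
  induction n with
  | zero => simp [cornerProd]
  | succ n ih =>
    intro x r
    rw [det_pathSum_rows_succ, ih, pathSum_col_one x (Nat.le_add_left 1 r),
      show r + (n + 1) = r + 1 + n by omega, cornerProd_succ_right,
      prod_range_add (fun a => x (a + 1) 1) (r + 1) n,
      Fin.prod_univ_eq_prod_range (fun k => x (r + 1 + k + 1) 1)]
    ring

theorem det_pathSum_of_le (x : ℕ → ℕ → K) {i j : ℕ} (h : j ≤ i) :
    (Matrix.of fun a b : Fin j => pathSum x (i - j + a + 1) (b + 1)).det = cornerProd x i j := by
  rw [det_pathSum_rows, Nat.sub_add_cancel h]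

theorem det_pathSum_of_ge (x : ℕ → ℕ → K) {i j : ℕ} (h : i ≤ j) :
    (Matrix.of fun a b : Fin i => pathSum x (a + 1) (j - i + b + 1)).det = cornerProd x i j := by
  rw [← Matrix.det_transpose, ← cornerProd_transpose, ← det_pathSum_of_le _ h]
  congr 1
  ext a b
  exact pathSum_transpose x _ _

end

/-- for an `m × n` matrix `X` with nonzero entries (accessed 1-based through
`x`), define `Φ = φ(X)` by `φ^i_j = Σ_{γ : (i,1)→(1,j)} x_γ`.  Then the special minor
`τ^i_j(Φ)` equals `Π_{a≤i, b≤j} x^a_b`, and consequently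
`x^i_j = τ^i_j τ^{i−1}_{j−1}/(τ^{i−1}_j τ^i_{j−1})`. -/
theorem tropical_rsk_stmt16 {K : Type*} [Field K] {m n : ℕ}
    (x : ℕ → ℕ → K) (hx : ∀ i j : ℕ, 1 ≤ i → i ≤ m → 1 ≤ j → j ≤ n → x i j ≠ 0)
    (Φ : Matrix (Fin m) (Fin n) K)
    (hΦ : ∀ (i : Fin m) (j : Fin n),
      Φ i j = ∑ᶠ (p : ℕ → ℕ × ℕ) (_ : IsPathNW ((i : ℕ) + 1) ((j : ℕ) + 1) p),
        pathProd x ((i : ℕ) + 1) ((j : ℕ) + 1) p)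
    (τ : ℕ → ℕ → K)
    (hτ0 : ∀ k : ℕ, τ 0 k = 1 ∧ τ k 0 = 1)
    (hτdef : ∀ (i j : ℕ) (h1 : 1 ≤ i) (h2 : i ≤ m) (h3 : 1 ≤ j) (h4 : j ≤ n),
      τ i j = if hji : j ≤ i then
          (Matrix.of (fun a b : Fin j =>
            Φ ⟨i - j + (a : ℕ), by have := a.isLt; omega⟩
              ⟨(b : ℕ), by have := b.isLt; omega⟩)).det
        else
          (Matrix.of (fun a b : Fin i =>
            Φ ⟨(a : ℕ), by have := a.isLt; omega⟩
              ⟨j - i + (b : ℕ), by have := b.isLt; omega⟩)).det) :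
    ∀ i j : ℕ, 1 ≤ i → i ≤ m → 1 ≤ j → j ≤ n →
      (τ i j = ∏ a ∈ Finset.Icc 1 i, ∏ b ∈ Finset.Icc 1 j, x a b) ∧
      x i j = τ i j * τ (i - 1) (j - 1) / (τ (i - 1) j * τ i (j - 1)) := by
  have hΦ' : ∀ a b, Φ a b = pathSum x (a + 1) (b + 1) := hΦ
  have hτ : ∀ i j, i ≤ m → j ≤ n → τ i j = cornerProd x i j := by
    intro i j him hjn
    rcases Nat.eq_zero_or_pos i with rfl | hi
    · simp [cornerProd, (hτ0 j).1]
    rcases Nat.eq_zero_or_pos j with rfl | hj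
    · simp [cornerProd, (hτ0 i).2]
    rw [hτdef i j hi him hj hjn]
    split_ifs with hji
    · simpa only [hΦ'] using det_pathSum_of_le x hji
    · simpa only [hΦ'] using det_pathSum_of_ge x (le_of_not_ge hji)
  intro i j hi him hj hjn
  rw [hτ i j him hjn, hτ (i - 1) (j - 1) (by omega) (by omega), hτ (i - 1) j (by omega) hjn,
    hτ i (j - 1) him (by omega)]
  exact ⟨rfl, eq_cornerProd_mul_div hi hj fun a b h1 h2 h3 h4 =>
    hx a b h1 (h2.trans him) h3 (h4.trans hjn)⟩
end

section
/- Fix p ∈ K* and n-vectors x, y of indeterminates, with indices extended to Z by x_{j+n} = p^{-1}x_j, y_{j+n} = p^{-1}y_j. The discrete Toda system x_j y_j = u_j v_j, 1/x_j + 1/y_{j+1} = 1/u_j + 1/v_{j+1} (j ∈ Z) for unknowns u, v with the same quasi-periodicity has exactly two solutions: (1) u_j = x_j, v_j = y_j; and (2) u_j = p·y_j·P_j/P_{j−1}, v_j = p^{-1}·x_j·P_{j−1}/P_j, where P_j = Σ_{k=1}^{n} y_{j+1}⋯y_{j+k} x_{j+k}⋯x_{j+n}. Moreover, the two solutions are characterized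 respectively by u₁⋯u_n = x₁⋯x_n, v₁⋯v_n = y₁⋯y_n, and by u₁⋯u_n = p^{-1}y₁⋯y_n, v₁⋯v_n = p·x₁⋯x_n. -/
/-!
A solution `(u, v)` is measured against the trivial one by its defect `r_j = u_j⁻¹ - x_j⁻¹`.
Eliminating `v` from the system gives `r_{j+1} = (y_{j+1} / u_{j+1}) r_j`, so the defect either
vanishes identically (and then `u = x`, `v = y`) or nowhere. In the second case, quasi-periodicity
`r_{j+n} = p r_j` together with the telescoped recursion gives `u₁⋯u_n = p⁻¹ y₁⋯y_n`, and `1/r`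
satisfies the affine recursion `1/r_{j+1} = x_{j+1} (1/(y_{j+1} r_j) - 1)`. For two such solutions
the difference of the `1/r` is multiplied by `x_{j+1}/y_{j+1}` at each step, hence by
`x₁⋯x_n / y₁⋯y_n ≠ p⁻¹` over a period, while quasi-periodicity multiplies it by `p⁻¹`: it vanishes,
and the two solutions coincide. The second family is a solution with nonvanishing defect
`r_j = -D_j / P_j`, where `D_j = p⁻¹ y_{j+1}⋯y_{j+n} - x_{j+1}⋯x_{j+n}`, by the identity
`p y_{j+1} P_{j+1} = x_{j+1} (P_j + y_{j+1} D_j)`.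
-/

open Finset

/-- `P_j = Σ_{k=1}^{n} y_{j+1}⋯y_{j+k} · x_{j+k}⋯x_{j+n}`. -/
def Pfun {K : Type*} [Field K] (n : ℕ) (x y : ℕ → K) (j : ℕ) : K :=
  ∑ k ∈ Finset.Icc 1 n,
    (∏ t ∈ Finset.Icc (j + 1) (j + k), y t) * ∏ t ∈ Finset.Icc (j + k) (j + n), x t

/-- The discrete Toda system `x_j y_j = u_j v_j`,
`1/x_j + 1/y_{j+1} = 1/u_j + 1/v_{j+1}` for the unknowns `(u,v)` with the quasi-periodicity
`u_{j+n} = p⁻¹u_j`, `v_{j+n} = p⁻¹v_j` (indices `j ≥ 1`). -/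
def SysDT {K : Type*} [Field K] (n : ℕ) (p : K) (x y u v : ℕ → K) : Prop :=
  (∀ j, 1 ≤ j → x j * y j = u j * v j) ∧
  (∀ j, 1 ≤ j → (x j)⁻¹ + (y (j + 1))⁻¹ = (u j)⁻¹ + (v (j + 1))⁻¹) ∧
  (∀ j, 1 ≤ j → u (j + n) = p⁻¹ * u j) ∧
  (∀ j, 1 ≤ j → v (j + n) = p⁻¹ * v j)

theorem Finset.mul_prod_Icc_add_one {M : Type*} [CommMonoid M] (f : ℕ → M) {a b : ℕ}
    (hab : a ≤ b + 1) :
    f a * ∏ t ∈ Icc (a + 1) (b + 1), f t = (∏ t ∈ Icc a b, f t) * f (b + 1) := by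
  rw [← prod_Icc_succ_top hab, Icc_add_one_left_eq_Ioc, mul_prod_Ioc_eq_prod_Icc hab]

theorem prod_Icc_add_one_eq_mul {K : Type*} [Field K] {f : ℕ → K} {c : K} {a b : ℕ}
    (hab : a ≤ b + 1) (ha : f a ≠ 0) (hper : f (b + 1) = c * f a) :
    ∏ t ∈ Icc (a + 1) (b + 1), f t = c * ∏ t ∈ Icc a b, f t := by
  apply mul_left_cancel₀ ha
  rw [mul_prod_Icc_add_one f hab, hper]
  ring

theorem eq_prod_Icc_mul_of_succ {M : Type*} [CommMonoid M] {a g : ℕ → M} {k : ℕ}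
    (h : ∀ j, k ≤ j → a (j + 1) = g (j + 1) * a j) {m : ℕ} (hkm : k ≤ m) :
    a m = (∏ t ∈ Icc (k + 1) m, g t) * a k := by
  induction m, hkm using Nat.le_induction with
  | base => simp
  | succ m hkm ih =>
    rw [h m hkm, ih, prod_Icc_succ_top (by omega)]
    ac_rfl

theorem prod_Icc_add_of_quasiperiodic {M : Type*} [CommMonoid M] {n : ℕ} {f : ℕ → M} {c : M}
    (hf : ∀ j, f (j + n) = c * f j) (a b : ℕ) :
    ∏ t ∈ Icc (a + n) (b + n), f t = c ^ (b + 1 - a) * ∏ t ∈ Icc a b, f t := by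
  rw [← map_add_right_Icc, prod_map]
  simp only [addRightEmbedding_apply, hf]
  rw [prod_mul_distrib, prod_const, Nat.card_Icc]

section DiscreteToda

variable {K : Type*} [Field K] {n : ℕ} {p : K} {x y u v u' v' : ℕ → K}

def defect (u x : ℕ → K) (j : ℕ) : K := (u j)⁻¹ - (x j)⁻¹

theorem defect_eq_zero_iff {j : ℕ} : defect u x j = 0 ↔ u j = x j := by
  rw [defect, sub_eq_zero, inv_inj]

theorem sysDT_self (hxper : ∀ j, x (j + n) = p⁻¹ * x j) (hyper : ∀ j, y (j + n) = p⁻¹ * y j) :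
    SysDT n p x y x y :=
  ⟨fun _ _ => rfl, fun _ _ => rfl, fun j _ => hxper j, fun j _ => hyper j⟩

namespace SysDT

theorem u_ne_zero (h : SysDT n p x y u v) (hx : ∀ j, x j ≠ 0) (hy : ∀ j, y j ≠ 0) {j : ℕ}
    (hj : 1 ≤ j) : u j ≠ 0 :=
  left_ne_zero_of_mul (h.1 j hj ▸ mul_ne_zero (hx j) (hy j))

theorem v_eq (h : SysDT n p x y u v) (hx : ∀ j, x j ≠ 0) (hy : ∀ j, y j ≠ 0) {j : ℕ}
    (hj : 1 ≤ j) : v j = x j * y j / u j := by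
  rw [h.1 j hj, mul_div_cancel_left₀ _ (h.u_ne_zero hx hy hj)]

theorem u_succ (h : SysDT n p x y u v) (hx : ∀ j, x j ≠ 0) (hy : ∀ j, y j ≠ 0) {j : ℕ}
    (hj : 1 ≤ j) : u (j + 1) = x (j + 1) * y (j + 1) * ((x j)⁻¹ + (y (j + 1))⁻¹ - (u j)⁻¹) := by
  rw [h.2.1 j hj, h.v_eq hx hy (by omega), add_sub_cancel_left, inv_div,
    mul_div_cancel₀ _ (mul_ne_zero (hx _) (hy _))]

theorem eq_of_eq_one (h : SysDT n p x y u v) (h' : SysDT n p x y u' v') (hx : ∀ j, x j ≠ 0)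
    (hy : ∀ j, y j ≠ 0) (h1 : u 1 = u' 1) {j : ℕ} (hj : 1 ≤ j) : u j = u' j ∧ v j = v' j := by
  have hu : u j = u' j := by
    induction j, hj using Nat.le_induction with
    | base => exact h1
    | succ j hj ih => rw [h.u_succ hx hy hj, h'.u_succ hx hy hj, ih]
  exact ⟨hu, by rw [h.v_eq hx hy hj, h'.v_eq hx hy hj, hu]⟩

theorem defect_succ (h : SysDT n p x y u v) (hx : ∀ j, x j ≠ 0) (hy : ∀ j, y j ≠ 0) {j : ℕ}
    (hj : 1 ≤ j) : defect u x (j + 1) = y (j + 1) / u (j + 1) * defect u x j := by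
  have htoda := h.2.1 j hj
  rw [h.v_eq hx hy (by omega : 1 ≤ j + 1)] at htoda
  have := h.u_ne_zero hx hy (by omega : 1 ≤ j + 1)
  have := hx (j + 1)
  have := hy (j + 1)
  unfold defect
  field_simp at htoda ⊢
  linear_combination htoda

theorem defect_add_period (h : SysDT n p x y u v) (hxper : ∀ j, x (j + n) = p⁻¹ * x j) {j : ℕ}
    (hj : 1 ≤ j) : defect u x (j + n) = p * defect u x j := by
  rw [defect, defect, h.2.2.1 j hj, hxper, mul_inv, mul_inv, inv_inv, mul_sub]

theorem defect_ne_zero (h : SysDT n p x y u v) (hx : ∀ j, x j ≠ 0) (hy : ∀ j, y j ≠ 0)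
    (h1 : defect u x 1 ≠ 0) {j : ℕ} (hj : 1 ≤ j) : defect u x j ≠ 0 := by
  rw [eq_prod_Icc_mul_of_succ (a := defect u x) (g := fun t => y t / u t)
    (fun j hj => h.defect_succ hx hy hj) hj]
  refine mul_ne_zero (prod_ne_zero_iff.2 fun t ht => ?_) h1
  exact div_ne_zero (hy t) (h.u_ne_zero hx hy (by simp at ht; omega))

theorem prod_div_eq (h : SysDT n p x y u v) (hp : p ≠ 0) (hx : ∀ j, x j ≠ 0)
    (hy : ∀ j, y j ≠ 0) (hxper : ∀ j, x (j + n) = p⁻¹ * x j)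
    (hyper : ∀ j, y (j + n) = p⁻¹ * y j) (h1 : defect u x 1 ≠ 0) :
    ∏ j ∈ Icc 1 n, y j / u j = p := by
  have hu1 := h.u_ne_zero hx hy le_rfl
  have hper : y (n + 1) / u (n + 1) = 1 * (y 1 / u 1) := by
    rw [add_comm n, hyper, h.2.2.1 1 le_rfl, mul_div_mul_left _ _ (inv_ne_zero hp), one_mul]
  have hrot := prod_Icc_add_one_eq_mul (f := fun t => y t / u t) (a := 1) (b := n) (by omega)
    (div_ne_zero (hy 1) hu1) hper
  have htele := eq_prod_Icc_mul_of_succ (a := defect u x) (g := fun t => y t / u t)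
    (fun j hj => h.defect_succ hx hy hj) (by omega : 1 ≤ n + 1)
  rw [hrot, one_mul, add_comm n, h.defect_add_period hxper le_rfl] at htele
  exact (mul_right_cancel₀ h1 htele).symm

theorem prod_eq_of_defect_ne_zero (h : SysDT n p x y u v) (hp : p ≠ 0) (hx : ∀ j, x j ≠ 0)
    (hy : ∀ j, y j ≠ 0) (hxper : ∀ j, x (j + n) = p⁻¹ * x j)
    (hyper : ∀ j, y (j + n) = p⁻¹ * y j) (h1 : defect u x 1 ≠ 0) :
    ∏ j ∈ Icc 1 n, u j = p⁻¹ * ∏ j ∈ Icc 1 n, y j ∧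
      ∏ j ∈ Icc 1 n, v j = p * ∏ j ∈ Icc 1 n, x j := by
  have hdiv := h.prod_div_eq hp hx hy hxper hyper h1
  have hU : ∏ j ∈ Icc 1 n, u j ≠ 0 :=
    prod_ne_zero_iff.2 fun j hj => h.u_ne_zero hx hy (mem_Icc.1 hj).1
  rw [prod_div_distrib, div_eq_iff hU] at hdiv
  refine ⟨by rw [hdiv, ← mul_assoc, inv_mul_cancel₀ hp, one_mul], ?_⟩
  rw [prod_congr rfl fun j hj => h.v_eq hx hy (mem_Icc.1 hj).1, prod_div_distrib,
    prod_mul_distrib, hdiv]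
  field_simp

theorem inv_defect_succ (h : SysDT n p x y u v) (hx : ∀ j, x j ≠ 0) (hy : ∀ j, y j ≠ 0)
    (h1 : defect u x 1 ≠ 0) {j : ℕ} (hj : 1 ≤ j) :
    (defect u x (j + 1))⁻¹ = x (j + 1) * ((defect u x j)⁻¹ / y (j + 1) - 1) := by
  have hsucc := h.defect_succ hx hy hj
  have := h.defect_ne_zero hx hy h1 hj
  have := h.defect_ne_zero hx hy h1 (by omega : 1 ≤ j + 1)
  have := h.u_ne_zero hx hy (by omega : 1 ≤ j + 1)
  have := hx (j + 1)
  have := hy (j + 1)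
  have hu : (u (j + 1))⁻¹ = defect u x (j + 1) + (x (j + 1))⁻¹ := by rw [defect]; ring
  rw [div_eq_mul_inv, hu] at hsucc
  field_simp at hsucc ⊢
  linear_combination -hsucc

theorem eq_one_of_defect_ne_zero (h : SysDT n p x y u v) (h' : SysDT n p x y u' v') (hp : p ≠ 0)
    (hx : ∀ j, x j ≠ 0) (hy : ∀ j, y j ≠ 0) (hxper : ∀ j, x (j + n) = p⁻¹ * x j)
    (hyper : ∀ j, y (j + n) = p⁻¹ * y j) (h1 : defect u x 1 ≠ 0) (h1' : defect u' x 1 ≠ 0)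
    (hXY : ∏ j ∈ Icc 1 n, x j ≠ p⁻¹ * ∏ j ∈ Icc 1 n, y j) : u 1 = u' 1 := by
  let d : ℕ → K := fun j => (defect u x j)⁻¹ - (defect u' x j)⁻¹
  have hsucc : ∀ j, 1 ≤ j → d (j + 1) = x (j + 1) / y (j + 1) * d j := by
    intro j hj
    simp only [d, h.inv_defect_succ hx hy h1 hj, h'.inv_defect_succ hx hy h1' hj]
    field_simp [hy (j + 1)]
    ring
  have hper : x (n + 1) / y (n + 1) = 1 * (x 1 / y 1) := by
    rw [add_comm n, hxper, hyper, mul_div_mul_left _ _ (inv_ne_zero hp), one_mul]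
  have hrot := prod_Icc_add_one_eq_mul (f := fun t => x t / y t) (a := 1) (b := n) (by omega)
    (div_ne_zero (hx 1) (hy 1)) hper
  have htele := eq_prod_Icc_mul_of_succ (a := d) (g := fun t => x t / y t) hsucc
    (by omega : 1 ≤ n + 1)
  have hperiod : d (1 + n) = p⁻¹ * d 1 := by
    simp only [d, h.defect_add_period hxper le_rfl, h'.defect_add_period hxper le_rfl, mul_inv,
      mul_sub]
  rw [hrot, one_mul, add_comm n, hperiod] at htele
  have hratio : ∏ j ∈ Icc 1 n, x j / y j ≠ p⁻¹ := by
    rwa [prod_div_distrib, ne_eq, div_eq_iff (prod_ne_zero_iff.2 fun j _ => hy j)]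
  have hd1 : d 1 = 0 := by
    by_contra hd1
    exact hratio (mul_right_cancel₀ hd1 htele).symm
  simpa [d, defect, sub_eq_zero] using hd1

end SysDT

theorem Pfun_eq_sum_range (j : ℕ) :
    Pfun n x y j = ∑ k ∈ range n,
      (∏ t ∈ Icc (j + 1) (j + (k + 1)), y t) * ∏ t ∈ Icc (j + (k + 1)) (j + n), x t := by
  rw [Pfun, ← Ico_add_one_right_eq_Icc, sum_Ico_eq_sum_range]
  simp only [add_tsub_cancel_right, add_comm 1]

theorem Pfun_succ_sub (j : ℕ) :
    y (j + 1) * Pfun n x y (j + 1) - x (j + n + 1) * Pfun n x y j =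
      (∏ t ∈ Icc (j + 1) (j + n + 1), y t) * x (j + n + 1) -
        y (j + 1) * ∏ t ∈ Icc (j + 1) (j + n + 1), x t := by
  let C : ℕ → K := fun k =>
    (∏ t ∈ Icc (j + 1) (j + k), y t) * ∏ t ∈ Icc (j + k) (j + n + 1), x t
  have hleft : y (j + 1) * Pfun n x y (j + 1) = ∑ k ∈ range n, C (k + 2) := by
    rw [Pfun_eq_sum_range, mul_sum]
    refine sum_congr rfl fun k _ => ?_
    rw [show j + 1 + (k + 1) = j + (k + 2) by omega, show j + 1 + n = j + n + 1 by omega,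
      ← mul_assoc, Icc_add_one_left_eq_Ioc (j + 1), mul_prod_Ioc_eq_prod_Icc (by omega)]
  have hright : x (j + n + 1) * Pfun n x y j = ∑ k ∈ range n, C (k + 1) := by
    rw [Pfun_eq_sum_range, mul_sum]
    refine sum_congr rfl fun k hk => ?_
    simp only [C, prod_Icc_succ_top (by simp at hk; omega : j + (k + 1) ≤ j + n + 1)]
    ring
  have htele : ∑ k ∈ range n, C (k + 2) + C 1 = ∑ k ∈ range n, C (k + 1) + C (n + 1) := by
    rw [← sum_range_succ' (fun k => C (k + 1)), sum_range_succ]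
  rw [hleft, hright]
  simp only [C, Icc_self, prod_singleton, add_assoc] at htele ⊢
  linear_combination htele

theorem Pfun_add_period (hxper : ∀ j, x (j + n) = p⁻¹ * x j)
    (hyper : ∀ j, y (j + n) = p⁻¹ * y j) (j : ℕ) :
    Pfun n x y (j + n) = p⁻¹ ^ (n + 1) * Pfun n x y j := by
  rw [Pfun, Pfun, mul_sum]
  refine sum_congr rfl fun k hk => ?_
  obtain ⟨hk1, hkn⟩ := mem_Icc.1 hk
  rw [add_right_comm, add_right_comm j n k, add_right_comm j n n,
    prod_Icc_add_of_quasiperiodic hyper, prod_Icc_add_of_quasiperiodic hxper,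
    show n + 1 = (j + k + 1 - (j + 1)) + (j + n + 1 - (j + k)) by omega, pow_add]
  ring

def Dfun (n : ℕ) (p : K) (x y : ℕ → K) (j : ℕ) : K :=
  p⁻¹ * (∏ t ∈ Icc (j + 1) (j + n), y t) - ∏ t ∈ Icc (j + 1) (j + n), x t

theorem Dfun_succ (hx : ∀ j, x j ≠ 0) (hy : ∀ j, y j ≠ 0)
    (hxper : ∀ j, x (j + n) = p⁻¹ * x j) (hyper : ∀ j, y (j + n) = p⁻¹ * y j) (j : ℕ) :
    Dfun n p x y (j + 1) = p⁻¹ * Dfun n p x y j := by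
  have hshift : j + n + 1 = j + 1 + n := by omega
  rw [Dfun, Dfun, ← hshift,
    prod_Icc_add_one_eq_mul (by omega) (hy (j + 1)) (by rw [hshift, hyper]),
    prod_Icc_add_one_eq_mul (by omega) (hx (j + 1)) (by rw [hshift, hxper])]
  ring

theorem mul_Pfun_succ (hp : p ≠ 0) (hxper : ∀ j, x (j + n) = p⁻¹ * x j)
    (hyper : ∀ j, y (j + n) = p⁻¹ * y j) (j : ℕ) :
    p * y (j + 1) * Pfun n x y (j + 1) =
      x (j + 1) * (Pfun n x y j + y (j + 1) * Dfun n p x y j) := by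
  have h := Pfun_succ_sub (n := n) (x := x) (y := y) j
  rw [prod_Icc_succ_top (by omega), prod_Icc_succ_top (by omega), add_right_comm, hxper,
    hyper] at h
  rw [Dfun]
  linear_combination p * h + x (j + 1) * (Pfun n x y j + y (j + 1) *
    (p⁻¹ * (∏ t ∈ Icc (j + 1) (j + n), y t) - ∏ t ∈ Icc (j + 1) (j + n), x t)) *
    mul_inv_cancel₀ hp

def secondU (n : ℕ) (p : K) (x y : ℕ → K) (j : ℕ) : K :=
  p * y j * Pfun n x y j / Pfun n x y (j - 1)

def secondV (n : ℕ) (p : K) (x y : ℕ → K) (j : ℕ) : K :=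
  p⁻¹ * x j * Pfun n x y (j - 1) / Pfun n x y j

theorem defect_secondU (hp : p ≠ 0) (hx : ∀ j, x j ≠ 0) (hy : ∀ j, y j ≠ 0)
    (hxper : ∀ j, x (j + n) = p⁻¹ * x j) (hyper : ∀ j, y (j + n) = p⁻¹ * y j)
    (hP : ∀ j, Pfun n x y j ≠ 0) (j : ℕ) :
    defect (secondU n p x y) x (j + 1) = -Dfun n p x y (j + 1) / Pfun n x y (j + 1) := by
  have hkey := mul_Pfun_succ hp hxper hyper j
  have := hx (j + 1)
  have := hy (j + 1)
  have := hP j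
  have := hP (j + 1)
  rw [defect, secondU, Nat.add_sub_cancel, Dfun_succ hx hy hxper hyper]
  field_simp
  linear_combination -hkey

theorem inv_sub_inv_secondV (hp : p ≠ 0) (hx : ∀ j, x j ≠ 0) (hy : ∀ j, y j ≠ 0)
    (hxper : ∀ j, x (j + n) = p⁻¹ * x j) (hyper : ∀ j, y (j + n) = p⁻¹ * y j)
    (hP : ∀ j, Pfun n x y j ≠ 0) (j : ℕ) :
    (y (j + 1))⁻¹ - (secondV n p x y (j + 1))⁻¹ = -Dfun n p x y j / Pfun n x y j := by
  have hkey := mul_Pfun_succ hp hxper hyper j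
  have := hx (j + 1)
  have := hy (j + 1)
  have := hP j
  have := hP (j + 1)
  rw [secondV, Nat.add_sub_cancel]
  field_simp
  linear_combination -hkey

theorem sysDT_second (hp : p ≠ 0) (hx : ∀ j, x j ≠ 0) (hy : ∀ j, y j ≠ 0)
    (hxper : ∀ j, x (j + n) = p⁻¹ * x j) (hyper : ∀ j, y (j + n) = p⁻¹ * y j)
    (hP : ∀ j, Pfun n x y j ≠ 0) :
    SysDT n p x y (secondU n p x y) (secondV n p x y) := by
  refine ⟨fun j hj => ?_, fun j hj => ?_, fun j hj => ?_, fun j hj => ?_⟩ <;>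
    obtain ⟨i, rfl⟩ : ∃ i, j = i + 1 := ⟨j - 1, by omega⟩
  · have := hP i
    have := hP (i + 1)
    rw [secondU, secondV, Nat.add_sub_cancel]
    field_simp
  · have hu := defect_secondU hp hx hy hxper hyper hP i
    have hv := inv_sub_inv_secondV hp hx hy hxper hyper hP (i + 1)
    rw [defect] at hu
    linear_combination hv - hu
  · have := hP i
    have := hP (i + 1)
    rw [secondU, secondU, Nat.add_sub_cancel, show i + 1 + n - 1 = i + n by omega, hyper,
      Pfun_add_period hxper hyper, Pfun_add_period hxper hyper]
    field_simp
  · have := hP i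
    have := hP (i + 1)
    rw [secondV, secondV, Nat.add_sub_cancel, show i + 1 + n - 1 = i + n by omega, hxper,
      Pfun_add_period hxper hyper, Pfun_add_period hxper hyper]
    field_simp

theorem defect_secondU_one_ne_zero (hp : p ≠ 0) (hx : ∀ j, x j ≠ 0) (hy : ∀ j, y j ≠ 0)
    (hxper : ∀ j, x (j + n) = p⁻¹ * x j) (hyper : ∀ j, y (j + n) = p⁻¹ * y j)
    (hP : ∀ j, Pfun n x y j ≠ 0) (hD : Dfun n p x y 1 ≠ 0) :
    defect (secondU n p x y) x 1 ≠ 0 := by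
  rw [defect_secondU hp hx hy hxper hyper hP 0]
  exact div_ne_zero (neg_ne_zero.2 hD) (hP 1)

end DiscreteToda

theorem tropical_rsk_stmt19_general {K : Type*} [Field K] {n : ℕ}
    (p : K) (hp : p ≠ 0) (x y : ℕ → K)
    (hx : ∀ j, x j ≠ 0) (hy : ∀ j, y j ≠ 0)
    (hxper : ∀ j, x (j + n) = p⁻¹ * x j) (hyper : ∀ j, y (j + n) = p⁻¹ * y j)
    (hP : ∀ j, Pfun n x y j ≠ 0)
    (hD : ∀ j, p⁻¹ * (∏ t ∈ Finset.Icc (j + 1) (j + n), y t) -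
      ∏ t ∈ Finset.Icc (j + 1) (j + n), x t ≠ 0) :
    SysDT n p x y x y ∧
    SysDT n p x y (fun j => p * y j * Pfun n x y j / Pfun n x y (j - 1))
      (fun j => p⁻¹ * x j * Pfun n x y (j - 1) / Pfun n x y j) ∧
    (∀ u v : ℕ → K, SysDT n p x y u v →
      (∀ j, 1 ≤ j → u j = x j ∧ v j = y j) ∨
      (∀ j, 1 ≤ j →
        u j = p * y j * Pfun n x y j / Pfun n x y (j - 1) ∧
        v j = p⁻¹ * x j * Pfun n x y (j - 1) / Pfun n x y j)) ∧
    (∀ u v : ℕ → K, SysDT n p x y u v →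
      (((∏ j ∈ Finset.Icc 1 n, u j) = (∏ j ∈ Finset.Icc 1 n, x j) ∧
        (∏ j ∈ Finset.Icc 1 n, v j) = ∏ j ∈ Finset.Icc 1 n, y j) ↔
        (∀ j, 1 ≤ j → u j = x j ∧ v j = y j)) ∧
      (((∏ j ∈ Finset.Icc 1 n, u j) = p⁻¹ * ∏ j ∈ Finset.Icc 1 n, y j ∧
        (∏ j ∈ Finset.Icc 1 n, v j) = p * ∏ j ∈ Finset.Icc 1 n, x j) ↔
        (∀ j, 1 ≤ j →
          u j = p * y j * Pfun n x y j / Pfun n x y (j - 1) ∧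
          v j = p⁻¹ * x j * Pfun n x y (j - 1) / Pfun n x y j))) := by
  have h₁ : SysDT n p x y x y := sysDT_self hxper hyper
  have h₂ := sysDT_second hp hx hy hxper hyper hP
  have hd₂ := defect_secondU_one_ne_zero hp hx hy hxper hyper hP (hD 1)
  have hXY : ∏ j ∈ Icc 1 n, x j ≠ p⁻¹ * ∏ j ∈ Icc 1 n, y j := fun h => hD 0 (by simp [h])
  have first {u v : ℕ → K} (h : SysDT n p x y u v) (hu : u 1 = x 1) :
      ∀ j, 1 ≤ j → u j = x j ∧ v j = y j :=
    fun _ hj => h.eq_of_eq_one h₁ hx hy hu hj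
  have second {u v : ℕ → K} (h : SysDT n p x y u v) (hu : u 1 ≠ x 1) :
      ∀ j, 1 ≤ j → u j = secondU n p x y j ∧ v j = secondV n p x y j :=
    fun _ hj => h.eq_of_eq_one h₂ hx hy (h.eq_one_of_defect_ne_zero h₂ hp hx hy hxper hyper
      (mt defect_eq_zero_iff.1 hu) hd₂ hXY) hj
  refine ⟨h₁, h₂, fun u v h => (em (u 1 = x 1)).imp (first h) (second h), fun u v h => ?_⟩
  by_cases hu : u 1 = x 1
  · have hprod : ∏ j ∈ Icc 1 n, u j = ∏ j ∈ Icc 1 n, x j ∧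
        ∏ j ∈ Icc 1 n, v j = ∏ j ∈ Icc 1 n, y j :=
      ⟨prod_congr rfl fun j hj => (first h hu j (mem_Icc.1 hj).1).1,
        prod_congr rfl fun j hj => (first h hu j (mem_Icc.1 hj).1).2⟩
    exact ⟨iff_of_true hprod (first h hu),
      iff_of_false (fun hprod' => hXY (hprod.1.symm.trans hprod'.1))
        fun hB => hd₂ (defect_eq_zero_iff.2 ((hB 1 le_rfl).1.symm.trans hu))⟩
  · have hprod := h.prod_eq_of_defect_ne_zero hp hx hy hxper hyper (mt defect_eq_zero_iff.1 hu)
    exact ⟨iff_of_false (fun hprod' => hXY (hprod'.1.symm.trans hprod.1))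
        fun hA => hu (hA 1 le_rfl).1,
      iff_of_true hprod (second h hu)⟩

/-- (generic situation) the discrete Toda system has exactly the two
solutions `(u,v) = (x,y)` and `u_j = p·y_j·P_j/P_{j−1}`, `v_j = p⁻¹·x_j·P_{j−1}/P_j`;
moreover they are characterized by `u₁⋯u_n = x₁⋯x_n`, `v₁⋯v_n = y₁⋯y_n`, respectively by
`u₁⋯u_n = p⁻¹y₁⋯y_n`, `v₁⋯v_n = p·x₁⋯x_n`. -/
theorem tropical_rsk_stmt19 {K : Type*} [Field K] {n : ℕ} (hn : 1 ≤ n)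
    (p : K) (hp : p ≠ 0) (x y : ℕ → K)
    (hx : ∀ j, x j ≠ 0) (hy : ∀ j, y j ≠ 0)
    (hxper : ∀ j, x (j + n) = p⁻¹ * x j) (hyper : ∀ j, y (j + n) = p⁻¹ * y j)
    (hP : ∀ j, Pfun n x y j ≠ 0)
    (hD : ∀ j, p⁻¹ * (∏ t ∈ Finset.Icc (j + 1) (j + n), y t) -
      ∏ t ∈ Finset.Icc (j + 1) (j + n), x t ≠ 0) :
    SysDT n p x y x y ∧
    SysDT n p x y (fun j => p * y j * Pfun n x y j / Pfun n x y (j - 1))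
      (fun j => p⁻¹ * x j * Pfun n x y (j - 1) / Pfun n x y j) ∧
    (∀ u v : ℕ → K, SysDT n p x y u v →
      (∀ j, 1 ≤ j → u j = x j ∧ v j = y j) ∨
      (∀ j, 1 ≤ j →
        u j = p * y j * Pfun n x y j / Pfun n x y (j - 1) ∧
        v j = p⁻¹ * x j * Pfun n x y (j - 1) / Pfun n x y j)) ∧
    (∀ u v : ℕ → K, SysDT n p x y u v →
      (((∏ j ∈ Finset.Icc 1 n, u j) = (∏ j ∈ Finset.Icc 1 n, x j) ∧
        (∏ j ∈ Finset.Icc 1 n, v j) = ∏ j ∈ Finset.Icc 1 n, y j) ↔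
        (∀ j, 1 ≤ j → u j = x j ∧ v j = y j)) ∧
      (((∏ j ∈ Finset.Icc 1 n, u j) = p⁻¹ * ∏ j ∈ Finset.Icc 1 n, y j ∧
        (∏ j ∈ Finset.Icc 1 n, v j) = p * ∏ j ∈ Finset.Icc 1 n, x j) ↔
        (∀ j, 1 ≤ j →
          u j = p * y j * Pfun n x y j / Pfun n x y (j - 1) ∧
          v j = p⁻¹ * x j * Pfun n x y (j - 1) / Pfun n x y j))) :=
  tropical_rsk_stmt19_general p hp x y hx hy hxper hyper hP hD
end
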